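/- arXiv:1912.12051 — 7 statements merged into one kernel-verified Lean document; each statement's English description precedes it below -/
import Mathlib

section
/- (Bernstein's inequality in L²) Let n ∈ ℕ and let f(x) = ∑_{k=0}^{n} (a_k cos(kx) + b_k sin(kx)) with real coefficients a_k, b_k. Then ∫_{−π}^{π} f'(x)² dx ≤ n² ∫_{−π}^{π} f(x)² dx. -/
/-! Integrating the square of a trigonometric polynomial term by term, the orthogonality of
the harmonics on `[-π, π]` gives Parseval's identity
`∫ f² = 2π a₀² + π ∑_{k ≥ 1} (a_k² + b_k²)`.
Differentiation turns the `k`-th harmonic with coefficients `(a_k, b_k)` into the one with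
coefficients `(k b_k, -k a_k)`, so the `k`-th term of Parseval's identity for `f'` is `k²` times
the one for `f`, and `k ≤ n` gives the inequality. -/

open Real Finset intervalIntegral

noncomputable section

def harmonicTerm (k : ℕ) (p q x : ℝ) : ℝ := p * cos (k * x) + q * sin (k * x)

def trigPoly (n : ℕ) (a b : ℕ → ℝ) (x : ℝ) : ℝ :=
  ∑ k ∈ range (n + 1), harmonicTerm k (a k) (b k) x

/-- The contribution of the `k`-th harmonic to `∫_{-π}^{π} f²`. -/
def harmonicNormSq (k : ℕ) (p q : ℝ) : ℝ :=
  if k = 0 then 2 * π * p ^ 2 else π * (p ^ 2 + q ^ 2)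

end

lemma continuous_harmonicTerm (k : ℕ) (p q : ℝ) : Continuous (harmonicTerm k p q) := by
  unfold harmonicTerm; fun_prop

lemma integral_cos_intCast_mul (m : ℤ) :
    ∫ x in (-π)..π, cos (m * x) = if m = 0 then 2 * π else 0 := by
  rcases eq_or_ne m 0 with rfl | hm
  · simp [two_mul]
  · rw [if_neg hm, integral_comp_mul_left cos (Int.cast_ne_zero.mpr hm), integral_cos,
      mul_neg, sin_neg, sin_int_mul_pi]
    simp

lemma integral_sin_intCast_mul (m : ℤ) : ∫ x in (-π)..π, sin (m * x) = 0 := by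
  rcases eq_or_ne m 0 with rfl | hm
  · simp
  · rw [integral_comp_mul_left sin (Int.cast_ne_zero.mpr hm), integral_sin, mul_neg, cos_neg,
      sub_self, smul_zero]

lemma harmonicTerm_mul_harmonicTerm (j k : ℕ) (p q r s x : ℝ) :
    harmonicTerm j p q x * harmonicTerm k r s x =
      (p * r + q * s) / 2 * cos (((j - k : ℤ) : ℝ) * x)
        + (p * r - q * s) / 2 * cos (((j + k : ℤ) : ℝ) * x)
        + (q * r + p * s) / 2 * sin (((j + k : ℤ) : ℝ) * x)
        + (q * r - p * s) / 2 * sin (((j - k : ℤ) : ℝ) * x) := by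
  simp only [harmonicTerm, Int.cast_sub, Int.cast_add, Int.cast_natCast, sub_mul, add_mul, cos_sub,
    cos_add, sin_add, sin_sub]
  ring

lemma integral_harmonicTerm_mul_harmonicTerm (j k : ℕ) (p q r s : ℝ) :
    ∫ x in (-π)..π, harmonicTerm j p q x * harmonicTerm k r s x =
      if j = k then (if j = 0 then 2 * π * (p * r) else π * (p * r + q * s)) else 0 := by
  simp_rw [harmonicTerm_mul_harmonicTerm]
  rw [integral_add, integral_add, integral_add, integral_const_mul, integral_const_mul,
    integral_const_mul, integral_const_mul, integral_cos_intCast_mul, integral_cos_intCast_mul,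
    integral_sin_intCast_mul, integral_sin_intCast_mul]
  any_goals exact Continuous.intervalIntegrable (by fun_prop) _ _
  rcases eq_or_ne j k with rfl | hjk
  · rcases eq_or_ne j 0 with rfl | hj
    · simp only [Nat.cast_zero, sub_self, add_zero, ↓reduceIte, mul_zero]; ring
    · have hsum : (j + j : ℤ) ≠ 0 := by omega
      simp only [sub_self, ↓reduceIte, hsum, hj, mul_zero, add_zero]; ring
  · have hdiff : (j - k : ℤ) ≠ 0 := by omega
    have hsum : (j + k : ℤ) ≠ 0 := by omega
    simp [hjk, hdiff, hsum]

lemma integral_trigPoly_sq (n : ℕ) (a b : ℕ → ℝ) :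
    ∫ x in (-π)..π, trigPoly n a b x ^ 2 =
      ∑ k ∈ range (n + 1), harmonicNormSq k (a k) (b k) := by
  simp_rw [trigPoly, sq, sum_mul_sum]
  rw [integral_finsetSum fun j _ => ?_]
  · refine sum_congr rfl fun j hj => ?_
    rw [integral_finsetSum fun k _ => ?_]
    · simp_rw [integral_harmonicTerm_mul_harmonicTerm, sum_ite_eq, if_pos hj, harmonicNormSq]
      split_ifs with hj0
      · rw [hj0]; ring
      · ring
    · exact ((continuous_harmonicTerm _ _ _).mul
        (continuous_harmonicTerm _ _ _)).intervalIntegrable _ _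
  · exact (continuous_finsetSum _ fun k _ =>
      (continuous_harmonicTerm _ _ _).mul (continuous_harmonicTerm _ _ _)).intervalIntegrable _ _

lemma hasDerivAt_harmonicTerm (k : ℕ) (p q x : ℝ) :
    HasDerivAt (harmonicTerm k p q) (harmonicTerm k (k * q) (-(k * p)) x) x := by
  have hlin : HasDerivAt (fun y : ℝ => (k : ℝ) * y) k x := by
    simpa using (hasDerivAt_id x).const_mul (k : ℝ)
  unfold harmonicTerm
  exact ((hlin.cos.const_mul p).fun_add (hlin.sin.const_mul q)).congr_deriv (by ring)

lemma hasDerivAt_trigPoly (n : ℕ) (a b : ℕ → ℝ) (x : ℝ) :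
    HasDerivAt (trigPoly n a b) (trigPoly n (fun k => k * b k) (fun k => -(k * a k)) x) x := by
  unfold trigPoly
  exact HasDerivAt.fun_sum fun k _ => hasDerivAt_harmonicTerm k (a k) (b k) x

lemma harmonicNormSq_nonneg (k : ℕ) (p q : ℝ) : 0 ≤ harmonicNormSq k p q := by
  unfold harmonicNormSq; split_ifs <;> positivity

lemma harmonicNormSq_derivCoeffs (k : ℕ) (p q : ℝ) :
    harmonicNormSq k (k * q) (-(k * p)) = (k : ℝ) ^ 2 * harmonicNormSq k p q := by
  unfold harmonicNormSq
  split_ifs with hk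
  · simp [hk]
  · ring

theorem stmt2 (n : ℕ) (a b : ℕ → ℝ) (f : ℝ → ℝ)
    (hf : ∀ x, f x = ∑ k ∈ Finset.range (n + 1),
      (a k * Real.cos (k * x) + b k * Real.sin (k * x))) :
    ∫ x in (-Real.pi)..Real.pi, (deriv f x) ^ 2
      ≤ (n : ℝ) ^ 2 * ∫ x in (-Real.pi)..Real.pi, (f x) ^ 2 := by
  obtain rfl : f = trigPoly n a b := funext hf
  have hderiv : deriv (trigPoly n a b) = trigPoly n (fun k => k * b k) (fun k => -(k * a k)) :=
    funext fun x => (hasDerivAt_trigPoly n a b x).deriv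
  rw [hderiv, integral_trigPoly_sq, integral_trigPoly_sq, mul_sum]
  refine sum_le_sum fun k hk => ?_
  have hkn : (k : ℝ) ≤ n := by exact_mod_cast mem_range_succ_iff.mp hk
  rw [harmonicNormSq_derivCoeffs]
  gcongr
  exact harmonicNormSq_nonneg _ _ _
end

section
/- Let P be a real trigonometric polynomial of degree at most n, let I be a closed bounded interval of length r, and suppose P has at least m zeros in I counting multiplicities. Then max_{θ∈I} |P(θ)| ≤ (4er/m)^m · max_{x∈I} |P^{(m)}(x)|, where P^{(m)} is the m-th derivative of P. -/
/-!
Fix `θ ∈ I` which is not one of the zeros `y₁, …, y_k`, and let `W(x) = ∏ (x - yᵢ) ^ mᵢ`, a monic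
polynomial of degree `m`. For `c = P(θ) / W(θ)` the function `g = P - c W` has the zeros of `P`
and in addition `θ`, so `m + 1` zeros in `I` counted with multiplicity. Applying Rolle's theorem
`m` times gives `ξ ∈ I` with `g⁽ᵐ⁾(ξ) = 0`, i.e. `P⁽ᵐ⁾(ξ) = c m!`. Hence
`|P(θ)| = |c| |W(θ)| ≤ r ^ m / m! · max |P⁽ᵐ⁾| ≤ (e r / m) ^ m · max |P⁽ᵐ⁾|`,
the last step being `m ^ m / m! ≤ e ^ m`.
-/

open Real

/-- `P` has at least `m` zeros in `I`, counting multiplicities. -/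
def HasZerosWithMult (P : ℝ → ℝ) (I : Set ℝ) (m : ℕ) : Prop :=
  ∃ (k : ℕ) (y : Fin k → ℝ) (mult : Fin k → ℕ),
    Function.Injective y ∧ (∀ i, y i ∈ I) ∧ (∀ i, 0 < mult i) ∧
    (∑ i, mult i) = m ∧ ∀ i : Fin k, ∀ j < mult i, iteratedDeriv j P (y i) = 0

open Polynomial Set
open scoped Nat

def IsMultisetOfZeros (f : ℝ → ℝ) (Z : Multiset ℝ) : Prop :=
  ∀ y, ∀ j < Z.count y, iteratedDeriv j f y = 0

theorem IsMultisetOfZeros.apply_eq_zero {f : ℝ → ℝ} {Z : Multiset ℝ} (h : IsMultisetOfZeros f Z)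
    {y : ℝ} (hy : y ∈ Z) : f y = 0 := by
  simpa using h y 0 (Multiset.count_pos.mpr hy)

theorem HasZerosWithMult.exists_multiset {f : ℝ → ℝ} {I : Set ℝ} {m : ℕ}
    (h : HasZerosWithMult f I m) :
    ∃ Z : Multiset ℝ, (∀ y ∈ Z, y ∈ I) ∧ Z.card = m ∧ IsMultisetOfZeros f Z := by
  classical
  obtain ⟨k, y, mult, hy, hyI, -, rfl, hz⟩ := h
  refine ⟨∑ i, Multiset.replicate (mult i) (y i), fun x hx => ?_, by simp, fun x j hj => ?_⟩
  · obtain ⟨i, -, hi⟩ := Multiset.mem_sum.mp hx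
    exact Multiset.eq_of_mem_replicate hi ▸ hyI i
  · obtain ⟨i, -, hi⟩ := Multiset.mem_sum.mp (Multiset.count_pos.mp (j.zero_le.trans_lt hj))
    obtain rfl := Multiset.eq_of_mem_replicate hi
    simp only [Multiset.count_sum', Multiset.count_replicate, hy.eq_iff,
      Finset.sum_ite_eq', Finset.mem_univ, if_true] at hj
    exact hz i j hj

theorem exists_finset_deriv_eq_zero_card_le_sdiff_succ {f : ℝ → ℝ} {I : Set ℝ}
    (hI : I.OrdConnected) (hf : ContinuousOn f I) {s : Finset ℝ} (hsI : ∀ y ∈ s, y ∈ I)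
    (hs : ∀ y ∈ s, f y = 0) :
    ∃ t : Finset ℝ, (∀ z ∈ t, z ∈ I ∧ deriv f z = 0) ∧ s.card ≤ (t \ s).card + 1 := by
  classical
  have hrolle : ∀ p : ℝ × ℝ, ∃ z, p ∈ s ×ˢ s → p.1 < p.2 → z ∈ Ioo p.1 p.2 ∧ deriv f z = 0 := by
    rintro ⟨x, y⟩
    by_cases hxy : (x, y) ∈ s ×ˢ s ∧ x < y
    · obtain ⟨hxy, hlt⟩ := hxy
      obtain ⟨hx, hy⟩ := Finset.mem_product.mp hxy
      obtain ⟨z, hz, hz'⟩ := exists_deriv_eq_zero hlt (hf.mono (hI.out (hsI x hx) (hsI y hy)))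
        ((hs x hx).trans (hs y hy).symm)
      exact ⟨z, fun _ _ => ⟨hz, hz'⟩⟩
    · exact ⟨0, fun hp hlt => absurd ⟨hp, hlt⟩ hxy⟩
  choose z hz using hrolle
  refine ⟨((s ×ˢ s).filter fun p => p.1 < p.2).image z, ?_, ?_⟩
  · simp only [Finset.mem_image, Finset.mem_filter]
    rintro _ ⟨p, ⟨hp, hlt⟩, rfl⟩
    obtain ⟨hx, hy⟩ := Finset.mem_product.mp hp
    exact ⟨hI.out (hsI _ hx) (hsI _ hy) (Ioo_subset_Icc_self (hz p hp hlt).1), (hz p hp hlt).2⟩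
  · refine Finset.card_le_sdiff_of_interleaved fun x hx y hy hlt _ => ?_
    have hp : (x, y) ∈ s ×ˢ s := Finset.mem_product.mpr ⟨hx, hy⟩
    exact ⟨z (x, y), Finset.mem_image_of_mem _ (Finset.mem_filter.mpr ⟨hp, hlt⟩), (hz _ hp hlt).1⟩

theorem IsMultisetOfZeros.exists_deriv {f : ℝ → ℝ} {I : Set ℝ} {Z : Multiset ℝ}
    (hI : I.OrdConnected) (hf : ContinuousOn f I) (hZI : ∀ y ∈ Z, y ∈ I)
    (h : IsMultisetOfZeros f Z) :
    ∃ Z' : Multiset ℝ, (∀ y ∈ Z', y ∈ I) ∧ Z.card ≤ Z'.card + 1 ∧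
      IsMultisetOfZeros (deriv f) Z' := by
  classical
  obtain ⟨t, ht, hcard⟩ := exists_finset_deriv_eq_zero_card_le_sdiff_succ hI hf
    (s := Z.toFinset) (by simpa using hZI) (by simpa using fun y => h.apply_eq_zero)
  -- each zero of `f` is a zero of `f'` of one order less, and the new Rolle points are simple
  refine ⟨(Z - Z.dedup) + (t \ Z.toFinset).val, ?_, ?_, ?_⟩
  · simp only [Multiset.mem_add, Finset.mem_val, Finset.mem_sdiff]
    rintro y (hy | ⟨hy, -⟩)
    · exact hZI y (Multiset.mem_of_le (Multiset.sub_le_self _ _) hy)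
    · exact (ht y hy).1
  · have hdedup : Z.dedup.card ≤ Z.card := Multiset.card_le_card Z.dedup_le
    rw [Multiset.card_add, Multiset.card_sub Z.dedup_le, Finset.card_val]
    rw [Finset.card_def, Multiset.toFinset_val] at hcard
    omega
  · intro y j hj
    by_cases hy : y ∈ Z
    · have ht' : y ∉ (t \ Z.toFinset).val := by
        rw [Finset.mem_val, Finset.mem_sdiff, Multiset.mem_toFinset]; tauto
      rw [Multiset.count_add, Multiset.count_sub, Multiset.count_dedup, if_pos hy,
        Multiset.count_eq_zero.mpr ht'] at hj
      rw [← iteratedDeriv_succ']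
      exact h y (j + 1) (by omega)
    · rw [Multiset.count_add, Multiset.count_sub, Multiset.count_eq_zero.mpr hy, zero_tsub,
        zero_add, Multiset.count_eq_of_nodup (t \ Z.toFinset).nodup] at hj
      split_ifs at hj with hyt
      · obtain rfl : j = 0 := by omega
        simpa using (ht y (Finset.mem_sdiff.mp hyt).1).2
      · omega

theorem IsMultisetOfZeros.exists_iteratedDeriv_eq_zero {I : Set ℝ} (hI : I.OrdConnected)
    {k : ℕ} {f : ℝ → ℝ} {Z : Multiset ℝ} (hf : ∀ j < k, ContinuousOn (iteratedDeriv j f) I)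
    (hZI : ∀ y ∈ Z, y ∈ I) (h : IsMultisetOfZeros f Z) (hk : k < Z.card) :
    ∃ ξ ∈ I, iteratedDeriv k f ξ = 0 := by
  induction k generalizing f Z with
  | zero =>
    obtain ⟨y, hy⟩ := Multiset.card_pos_iff_exists_mem.mp hk
    exact ⟨y, hZI y hy, by simpa using h.apply_eq_zero hy⟩
  | succ k ih =>
    obtain ⟨Z', hZ'I, hcard, h'⟩ := h.exists_deriv hI (by simpa using hf 0 k.succ_pos) hZI
    simp only [iteratedDeriv_succ']
    exact ih (fun j hj => by simpa [iteratedDeriv_succ'] using hf (j + 1) (by omega)) hZ'I h'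
      (by omega)

theorem IsMultisetOfZeros.cons {f : ℝ → ℝ} {Z : Multiset ℝ} (h : IsMultisetOfZeros f Z) {θ : ℝ}
    (hθZ : θ ∉ Z) (hfθ : f θ = 0) : IsMultisetOfZeros f (θ ::ₘ Z) := by
  intro y j hj
  by_cases hy : y = θ
  · subst hy
    rw [Multiset.count_cons_self, Multiset.count_eq_zero.mpr hθZ] at hj
    obtain rfl : j = 0 := by omega
    simpa using hfθ
  · exact h y j (by rwa [Multiset.count_cons_of_ne hy] at hj)

theorem iteratedDeriv_sub_const_mul {f g : ℝ → ℝ} {n : ℕ} (hf : ContDiff ℝ n f)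
    (hg : ContDiff ℝ n g) (c x : ℝ) :
    iteratedDeriv n (fun x => f x - c * g x) x = iteratedDeriv n f x - c * iteratedDeriv n g x := by
  rw [iteratedDeriv_fun_sub hf.contDiffAt (contDiff_const.mul hg).contDiffAt,
    iteratedDeriv_const_mul_field]

theorem IsMultisetOfZeros.sub_const_mul {f g : ℝ → ℝ} {Z : Multiset ℝ}
    (hf : ContDiff ℝ Z.card f) (hg : ContDiff ℝ Z.card g) (h₁ : IsMultisetOfZeros f Z)
    (h₂ : IsMultisetOfZeros g Z) (c : ℝ) : IsMultisetOfZeros (fun x => f x - c * g x) Z := by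
  intro y j hj
  have hj' : (j : WithTop ℕ∞) ≤ Z.card := by
    exact_mod_cast (hj.trans_le (Multiset.count_le_card y Z)).le
  rw [iteratedDeriv_sub_const_mul (hf.of_le hj') (hg.of_le hj'), h₁ y j hj, h₂ y j hj]
  ring

theorem Polynomial.iteratedDeriv_eval {𝕜 : Type*} [NontriviallyNormedField 𝕜] (k : ℕ)
    (p : 𝕜[X]) : iteratedDeriv k (fun x => p.eval x) = fun x => (derivative^[k] p).eval x := by
  induction k generalizing p with
  | zero => simp
  | succ k ih =>
    have hderiv : deriv (fun x => p.eval x) = fun x => (derivative p).eval x := by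
      ext x; exact p.deriv
    rw [iteratedDeriv_succ', hderiv, ih, Function.iterate_succ_apply]

theorem Polynomial.Monic.iterate_derivative_natDegree {R : Type*} [CommSemiring R] {p : R[X]}
    (hp : p.Monic) : derivative^[p.natDegree] p = C (p.natDegree ! : R) := by
  rw [eq_C_of_natDegree_le_zero ((natDegree_iterate_derivative p _).trans (Nat.sub_self _).le),
    coeff_iterate_derivative, zero_add, Nat.descFactorial_self, hp.coeff_natDegree, nsmul_one]

theorem isMultisetOfZeros_eval_prod_X_sub_C (Z : Multiset ℝ) :
    IsMultisetOfZeros (fun x => (Z.map fun y => X - C y).prod.eval x) Z := by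
  classical
  intro y j hj
  rw [iteratedDeriv_eval]
  apply isRoot_iterate_derivative_of_lt_rootMultiplicity
  rwa [← count_roots, roots_multiset_prod_X_sub_C]

theorem IsMultisetOfZeros.exists_mul_factorial_eq {I : Set ℝ} (hI : I.OrdConnected) {f : ℝ → ℝ}
    {Z : Multiset ℝ} (hf : ContDiff ℝ Z.card f) (hZI : ∀ y ∈ Z, y ∈ I)
    (h : IsMultisetOfZeros f Z) {θ : ℝ} (hθ : θ ∈ I) :
    ∃ ξ ∈ I, f θ * Z.card ! = (Z.map (θ - ·)).prod * iteratedDeriv Z.card f ξ := by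
  by_cases hθZ : θ ∈ Z
  · refine ⟨θ, hθ, ?_⟩
    rw [h.apply_eq_zero hθZ, Multiset.prod_eq_zero (Multiset.mem_map.mpr ⟨θ, hθZ, sub_self θ⟩)]
    ring
  set W := (Z.map fun y => X - C y).prod
  have hWsmooth : ContDiff ℝ Z.card fun x => W.eval x := W.contDiff_aeval _
  have hWθ : W.eval θ = (Z.map (θ - ·)).prod := by
    simp [W, eval_multiset_prod, Multiset.map_map]
  have hWθ0 : W.eval θ ≠ 0 := by
    rw [hWθ, Ne, Multiset.prod_eq_zero_iff, Multiset.mem_map]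
    rintro ⟨y, hy, hθy⟩
    exact hθZ (sub_eq_zero.mp hθy ▸ hy)
  set c := f θ / W.eval θ
  have hgZ : IsMultisetOfZeros (fun x => f x - c * W.eval x) (θ ::ₘ Z) :=
    (h.sub_const_mul hf hWsmooth (isMultisetOfZeros_eval_prod_X_sub_C Z) c).cons hθZ
      (by simp [c, div_mul_cancel₀ _ hWθ0])
  have hgsmooth : ContDiff ℝ Z.card fun x => f x - c * W.eval x :=
    hf.sub (contDiff_const.mul hWsmooth)
  obtain ⟨ξ, hξ, hξ0⟩ := hgZ.exists_iteratedDeriv_eq_zero hI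
    (fun j hj => (hgsmooth.continuous_iteratedDeriv j (by exact_mod_cast hj.le)).continuousOn)
    (by simpa using ⟨hθ, hZI⟩) (by simp)
  have hWderiv : iteratedDeriv Z.card (fun x => W.eval x) ξ = Z.card ! := by
    have hWmonic : W.Monic := monic_multiset_prod_of_monic _ _ fun y _ => monic_X_sub_C y
    have hWdeg : W.natDegree = Z.card := natDegree_multiset_prod_X_sub_C_eq_card Z
    rw [iteratedDeriv_eval, ← hWdeg, hWmonic.iterate_derivative_natDegree]
    exact eval_C
  rw [iteratedDeriv_sub_const_mul hf hWsmooth, hWderiv, sub_eq_zero] at hξ0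
  exact ⟨ξ, hξ, by rw [← hWθ, hξ0, ← mul_assoc, mul_div_cancel₀ _ hWθ0]⟩

theorem abs_prod_map_sub_le_pow_card {u v θ : ℝ} {Z : Multiset ℝ} (hθ : θ ∈ Icc u v)
    (hZ : ∀ y ∈ Z, y ∈ Icc u v) : |(Z.map (θ - ·)).prod| ≤ (v - u) ^ Z.card := by
  induction Z using Multiset.induction_on with
  | empty => simp
  | cons y Z ih =>
    rw [Multiset.map_cons, Multiset.prod_cons, abs_mul, Multiset.card_cons, pow_succ']
    exact mul_le_mul (Real.dist_le_of_mem_Icc hθ (hZ y (Multiset.mem_cons_self y Z)))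
      (ih fun x hx => hZ x (Multiset.mem_cons_of_mem hx)) (abs_nonneg _)
      (sub_nonneg.mpr (hθ.1.trans hθ.2))

theorem HasZerosWithMult.abs_le_pow_div_factorial_mul_sSup {f : ℝ → ℝ} {u v : ℝ} {m : ℕ}
    (hf : ContDiff ℝ m f) (h : HasZerosWithMult f (Icc u v) m) {θ : ℝ} (hθ : θ ∈ Icc u v) :
    |f θ| ≤ (v - u) ^ m / m ! * sSup ((fun x => |iteratedDeriv m f x|) '' Icc u v) := by
  obtain ⟨Z, hZI, rfl, hZ⟩ := h.exists_multiset
  obtain ⟨ξ, hξ, hremainder⟩ := hZ.exists_mul_factorial_eq ordConnected_Icc hf hZI hθ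
  have hbdd : BddAbove ((fun x => |iteratedDeriv Z.card f x|) '' Icc u v) :=
    isCompact_Icc.bddAbove_image (hf.continuous_iteratedDeriv _ le_rfl).abs.continuousOn
  rw [div_mul_eq_mul_div, le_div_iff₀ (by positivity)]
  calc |f θ| * Z.card ! = |f θ * Z.card !| := by rw [abs_mul, Nat.abs_cast]
    _ = |(Z.map (θ - ·)).prod| * |iteratedDeriv Z.card f ξ| := by rw [hremainder, abs_mul]
    _ ≤ (v - u) ^ Z.card * sSup ((fun x => |iteratedDeriv Z.card f x|) '' Icc u v) :=
      mul_le_mul (abs_prod_map_sub_le_pow_card hθ hZI) (le_csSup hbdd ⟨ξ, hξ, rfl⟩)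
        (abs_nonneg _) (pow_nonneg (sub_nonneg.mpr (hθ.1.trans hθ.2)) _)

theorem pow_div_factorial_le_exp_one_mul_div_pow {r : ℝ} (hr : 0 ≤ r) (m : ℕ) :
    r ^ m / m ! ≤ (exp 1 * r / m) ^ m := by
  rcases m.eq_zero_or_pos with rfl | hm
  · simp
  have hfact : (m : ℝ) ^ m ≤ exp m * m ! := by
    rw [← div_le_iff₀ (by positivity)]
    exact pow_div_factorial_le_exp _ m.cast_nonneg m
  rw [div_pow, mul_pow, exp_one_pow, div_le_div_iff₀ (by positivity) (by positivity)]
  calc r ^ m * (m : ℝ) ^ m ≤ r ^ m * (exp m * m !) := by gcongr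
    _ = exp m * r ^ m * m ! := by ring

theorem stmt5_general (n m : ℕ) (a b : ℕ → ℝ) (P : ℝ → ℝ)
    (hP : ∀ x, P x = ∑ k ∈ Finset.range (n + 1),
      (a k * Real.cos (k * x) + b k * Real.sin (k * x)))
    (u v r : ℝ) (hr : r = v - u)
    (hz : HasZerosWithMult P (Set.Icc u v) m) :
    ∀ θ ∈ Set.Icc u v,
      |P θ| ≤ (4 * Real.exp 1 * r / m) ^ m *
        sSup ((fun x => |iteratedDeriv m P x|) '' Set.Icc u v) := by
  intro θ hθ
  have hPsmooth : ContDiff ℝ m P := by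
    rw [funext hP]
    fun_prop
  have hr0 : 0 ≤ r := hr ▸ sub_nonneg.mpr (hθ.1.trans hθ.2)
  set M := sSup ((fun x => |iteratedDeriv m P x|) '' Set.Icc u v)
  have hM : 0 ≤ M := Real.sSup_nonneg (by rintro _ ⟨x, -, rfl⟩; exact abs_nonneg _)
  calc |P θ| ≤ r ^ m / m ! * M := hr ▸ hz.abs_le_pow_div_factorial_mul_sSup hPsmooth hθ
    _ ≤ (exp 1 * r / m) ^ m * M := by
      gcongr
      exact pow_div_factorial_le_exp_one_mul_div_pow hr0 m
    _ ≤ (4 * exp 1 * r / m) ^ m * M := by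
      gcongr
      linarith [exp_pos 1]

theorem stmt5 (n m : ℕ) (hm : 0 < m) (a b : ℕ → ℝ) (P : ℝ → ℝ)
    (hP : ∀ x, P x = ∑ k ∈ Finset.range (n + 1),
      (a k * Real.cos (k * x) + b k * Real.sin (k * x)))
    (u v r : ℝ) (huv : u ≤ v) (hr : r = v - u)
    (hz : HasZerosWithMult P (Set.Icc u v) m) :
    ∀ θ ∈ Set.Icc u v,
      |P θ| ≤ (4 * Real.exp 1 * r / m) ^ m *
        sSup ((fun x => |iteratedDeriv m P x|) '' Set.Icc u v) :=
  stmt5_general n m a b P hP u v r hr hz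
end

section
/- Let P be a real trigonometric polynomial of degree at most n, let m ≥ 2, and suppose P has at least m zeros, counting multiplicities, in an interval I of length smaller than (1/(8e))·(m/n). Then for any closed interval I' of length (1/(8e))·(m/n) with I ⊆ I', one has max_{θ∈I'} |P(θ)| ≤ (1/2)^m · n^{−m} · max_{x∈I'} |P^{(m)}(x)| and max_{θ∈I'} |P'(θ)| ≤ n · (1/2)^{m−1} · n^{−m} · max_{x∈I'} |P^{(m)}(x)|. -/
open Real

/-!
Let `ω = ∏ (X - yᵢ) ^ μᵢ` be the node polynomial of the `M` zeros of `f` in `[u, v]`. For `θ` in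
`[u, v]` the function `ω(θ) f - f(θ) ω` has `M + 1` zeros there, so by Rolle's theorem with
multiplicities its `M`-th derivative vanishes at some `ξ`, i.e. `M! f(θ) = ω(θ) f⁽ᴹ⁾(ξ)`, whence
`|f(θ)| ≤ (v - u) ^ M / M! · sup |f⁽ᴹ⁾|`. This is applied to `P` with `M = m` and, after one more
use of Rolle, to `P'` with `M = m - 1`; on an interval of length `m / (8 e n)` the constants follow
from `m ^ m ≤ e ^ m m!`.
-/

open Set Function Polynomial
open scoped Nat

namespace HasZerosWithMult

variable {f : ℝ → ℝ} {I : Set ℝ} {m : ℕ}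

theorem mono {J : Set ℝ} (h : HasZerosWithMult f I m) (hIJ : I ⊆ J) :
    HasZerosWithMult f J m :=
  let ⟨k, y, mult, hy, hyI, hpos, hsum, hz⟩ := h
  ⟨k, y, mult, hy, fun i => hIJ (hyI i), hpos, hsum, hz⟩

theorem of_fintype {ι : Type*} [Fintype ι] (y : ι → ℝ) (mult : ι → ℕ) (hy : Injective y)
    (hyI : ∀ i, y i ∈ I) (hsum : ∑ i, mult i = m)
    (hz : ∀ i, ∀ j < mult i, iteratedDeriv j f (y i) = 0) :
    HasZerosWithMult f I m := by
  classical
  let T := {i : ι // mult i ≠ 0}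
  let e : Fin (Fintype.card T) ≃ T := (Fintype.equivFin T).symm
  refine ⟨Fintype.card T, fun i => y (e i), fun i => mult (e i),
    hy.comp (Subtype.val_injective.comp e.injective), fun i => hyI _,
    fun i => Nat.pos_of_ne_zero (e i).2, ?_, fun i => hz _⟩
  calc ∑ i, mult (e i) = ∑ t : T, mult t := e.sum_comp (fun t : T => mult t)
    _ = ∑ i with mult i ≠ 0, mult i := (Finset.sum_subtype _ (fun i => by simp) _).symm
    _ = m := by rw [Finset.sum_filter_ne_zero, hsum]

theorem of_fintype_of_apply_eq_zero {ι : Type*} [Fintype ι] (y : ι → ℝ) (mult : ι → ℕ)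
    (hy : Injective y) (hyI : ∀ i, y i ∈ I) (hsum : ∑ i, mult i = m)
    (hz : ∀ i, ∀ j < mult i, iteratedDeriv j f (y i) = 0) {θ : ℝ} (hθ : θ ∈ I)
    (hθy : θ ∉ range y) (hfθ : f θ = 0) : HasZerosWithMult f I (m + 1) := by
  refine of_fintype (fun o : Option ι => o.elim θ y) (fun o => o.elim 1 mult) ?_ ?_ ?_ ?_
  · rintro (_ | a) (_ | b) hab
    · rfl
    · exact absurd ⟨b, hab.symm⟩ hθy
    · exact absurd ⟨a, hab⟩ hθy
    · exact congrArg some (hy hab)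
  · rintro (_ | i)
    exacts [hθ, hyI i]
  · simp only [Fintype.sum_option, Option.elim]
    omega
  · rintro (_ | i) j hj
    · obtain rfl : j = 0 := by simpa using hj
      simpa using hfθ
    · exact hz i j hj

theorem exists_strictMono (h : HasZerosWithMult f I m) :
    ∃ (k : ℕ) (y : Fin k → ℝ) (mult : Fin k → ℕ), StrictMono y ∧ (∀ i, y i ∈ I) ∧
      (∀ i, 0 < mult i) ∧ ∑ i, mult i = m ∧
      ∀ i, ∀ j < mult i, iteratedDeriv j f (y i) = 0 := by
  obtain ⟨k, y, mult, hy, hyI, hpos, hsum, hz⟩ := h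
  let σ := Tuple.sort y
  refine ⟨k, y ∘ σ, mult ∘ σ, (Tuple.monotone_sort y).strictMono_of_injective
    (hy.comp σ.injective), fun i => hyI _, fun i => hpos _, ?_, fun i => hz _⟩
  rw [← hsum]
  exact Equiv.sum_comp σ mult

/-- Rolle's theorem with multiplicities: a zero of `f` of multiplicity `μ` is a zero of `f'` of
multiplicity `μ - 1`, and `f'` vanishes once more strictly between consecutive zeros of `f`. -/
theorem deriv (hf : ContinuousOn f I) (hI : I.OrdConnected) (h : HasZerosWithMult f I (m + 1)) :
    HasZerosWithMult (deriv f) I m := by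
  obtain ⟨k, y, mult, hy, hyI, hpos, hsum, hz⟩ := h.exists_strictMono
  obtain ⟨k, rfl⟩ : ∃ k', k = k' + 1 :=
    Nat.exists_eq_succ_of_ne_zero (by rintro rfl; simp at hsum)
  have hzero (i) : f (y i) = 0 := by simpa using hz i 0 (hpos i)
  have hrolle (i : Fin k) : ∃ c ∈ Ioo (y i.castSucc) (y i.succ), _root_.deriv f c = 0 :=
    exists_deriv_eq_zero (hy i.castSucc_lt_succ) (hf.mono (hI.out (hyI _) (hyI _)))
      ((hzero _).trans (hzero _).symm)
  choose c hc hc0 using hrolle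
  have hyc (j : Fin (k + 1)) (i : Fin k) : y j ≠ c i := by
    rcases le_or_gt j i.castSucc with hj | hj
    · exact ((hy.monotone hj).trans_lt (hc i).1).ne
    · exact ((hc i).2.trans_le (hy.monotone (Fin.castSucc_lt_iff_succ_le.1 hj))).ne'
  have hcmono : StrictMono c := fun i i' hii' =>
    ((hc i).2.trans_le (hy.monotone (Fin.succ_le_castSucc_iff.2 hii'))).trans (hc i').1
  refine of_fintype (Sum.elim y c) (Sum.elim (fun i => mult i - 1) fun _ => 1)
    (hy.injective.sumElim hcmono.injective hyc) ?_ ?_ ?_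
  · rintro (i | i)
    exacts [hyI i, hI.out (hyI _) (hyI _) (Ioo_subset_Icc_self (hc i))]
  · have : ∑ i, (mult i - 1 + 1) = m + 1 := by
      rw [← hsum]
      exact Finset.sum_congr rfl fun i _ => Nat.sub_add_cancel (hpos i)
    rw [Finset.sum_add_distrib] at this
    simp only [Fintype.sum_sum_type, Sum.elim_inl, Sum.elim_inr, Finset.sum_const,
      Finset.card_univ, Fintype.card_fin, smul_eq_mul, mul_one] at this ⊢
    omega
  · rintro (i | i) j hj
    · rw [Sum.elim_inl, ← iteratedDeriv_succ']
      exact hz i (j + 1) (by simp only [Sum.elim_inl] at hj; omega)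
    · obtain rfl : j = 0 := by simpa using hj
      simpa using hc0 i

theorem exists_iteratedDeriv_eq_zero {M : ℕ} (hf : ContDiff ℝ M f) (hI : I.OrdConnected)
    (h : HasZerosWithMult f I (M + 1)) : ∃ ξ ∈ I, iteratedDeriv M f ξ = 0 := by
  induction M generalizing f with
  | zero =>
    obtain ⟨k, y, mult, -, hyI, hpos, hsum, hz⟩ := h
    obtain ⟨i, -⟩ := Finset.exists_ne_zero_of_sum_ne_zero (hsum.trans_ne one_ne_zero)
    exact ⟨y i, hyI i, by simpa using hz i 0 (hpos i)⟩
  | succ M ih =>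
    rw [Nat.cast_add_one, contDiff_succ_iff_deriv] at hf
    simpa only [iteratedDeriv_succ'] using
      ih hf.2.2 (h.deriv hf.1.continuous.continuousOn hI)

end HasZerosWithMult

namespace Polynomial

theorem iteratedDeriv_eval_s7 {𝕜 : Type*} [NontriviallyNormedField 𝕜] (p : 𝕜[X]) (j : ℕ) :
    iteratedDeriv j (fun x => p.eval x) = fun x => (derivative^[j] p).eval x := by
  induction j generalizing p with
  | zero => rfl
  | succ j ih =>
    rw [iteratedDeriv_succ', show _root_.deriv (fun x => p.eval x) = fun x => p.derivative.eval x
      by ext x; exact p.deriv, ih, iterate_succ_apply]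

variable {R ι : Type*} [CommRing R] [Fintype ι]

theorem Monic.iterate_derivative_natDegree_s7 {p : R[X]} (hp : p.Monic) :
    derivative^[p.natDegree] p = C (p.natDegree ! : R) := by
  have hdeg : (derivative^[p.natDegree] p).natDegree ≤ 0 := by
    simpa using p.natDegree_iterate_derivative p.natDegree
  rw [eq_C_of_natDegree_le_zero hdeg, coeff_iterate_derivative, zero_add,
    Nat.descFactorial_self, hp.coeff_natDegree, nsmul_one]

theorem natDegree_prod_X_sub_C_pow [Nontrivial R] (y : ι → R) (mult : ι → ℕ) :
    (∏ i, (X - C (y i)) ^ mult i).natDegree = ∑ i, mult i := by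
  rw [natDegree_prod_of_monic _ _ fun i _ => (monic_X_sub_C (y i)).pow _]
  simp [(monic_X_sub_C _).natDegree_pow]

theorem eval_iterate_derivative_prod_X_sub_C_pow (y : ι → R) (mult : ι → ℕ) {i : ι} {j : ℕ}
    (hj : j < mult i) : (derivative^[j] (∏ i, (X - C (y i)) ^ mult i)).eval (y i) = 0 := by
  obtain ⟨r, hr⟩ := pow_sub_dvd_iterate_derivative_of_pow_dvd j
    (Finset.dvd_prod_of_mem (fun i => (X - C (y i)) ^ mult i) (Finset.mem_univ i))
  rw [hr, eval_mul, eval_pow, eval_sub, eval_X, eval_C, sub_self, zero_pow (by omega), zero_mul]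

end Polynomial

/-- The remainder formula of Hermite interpolation at the nodes `y i`. -/
theorem exists_mul_factorial_eq_prod_mul_iteratedDeriv {ι : Type*} [Fintype ι] {f : ℝ → ℝ}
    {I : Set ℝ} {M : ℕ} (hf : ContDiff ℝ M f) (hI : I.OrdConnected) (y : ι → ℝ)
    (mult : ι → ℕ) (hy : Injective y) (hyI : ∀ i, y i ∈ I) (hpos : ∀ i, 0 < mult i)
    (hsum : ∑ i, mult i = M) (hz : ∀ i, ∀ j < mult i, iteratedDeriv j f (y i) = 0)
    {θ : ℝ} (hθ : θ ∈ I) :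
    ∃ ξ ∈ I, f θ * M ! = (∏ i, (θ - y i) ^ mult i) * iteratedDeriv M f ξ := by
  by_cases hθy : θ ∈ range y
  · obtain ⟨i, rfl⟩ := hθy
    refine ⟨y i, hθ, ?_⟩
    rw [show f (y i) = 0 by simpa using hz i 0 (hpos i),
      Finset.prod_eq_zero (Finset.mem_univ i) (by simp [(hpos i).ne']), zero_mul, zero_mul]
  set q : ℝ[X] := ∏ i, (X - C (y i)) ^ mult i
  have hq_eval (x : ℝ) : q.eval x = ∏ i, (x - y i) ^ mult i := by simp [q, eval_prod]
  have hqM : derivative^[M] q = C (M ! : ℝ) := by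
    have hdeg : q.natDegree = M := (natDegree_prod_X_sub_C_pow y mult).trans hsum
    rw [← hdeg]
    exact Monic.iterate_derivative_natDegree_s7
      (monic_prod_of_monic _ _ fun i _ => (monic_X_sub_C (y i)).pow _)
  have hqc (n : WithTop ℕ∞) : ContDiff ℝ n fun x => q.eval x := q.contDiff_aeval n
  -- `g` vanishes at `θ` as well as wherever `f` does, hence `M + 1` times in `I`.
  set g : ℝ → ℝ := fun x => q.eval θ * f x - f θ * q.eval x
  have hg {j : ℕ} (hj : j ≤ M) (x : ℝ) :
      iteratedDeriv j g x = q.eval θ * iteratedDeriv j f x - f θ * (derivative^[j] q).eval x := by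
    have hfj : ContDiff ℝ j f := hf.of_le (by exact_mod_cast hj)
    rw [iteratedDeriv_fun_sub (contDiff_const.mul hfj).contDiffAt
        (contDiff_const.mul (hqc j)).contDiffAt,
      iteratedDeriv_const_mul_field, iteratedDeriv_const_mul_field, q.iteratedDeriv_eval_s7]
  have hgz : HasZerosWithMult g I (M + 1) := by
    refine .of_fintype_of_apply_eq_zero y mult hy hyI hsum (fun i j hj => ?_) hθ hθy
      (by simp only [g]; ring)
    have hjM : j ≤ M := hsum ▸ hj.le.trans (Finset.single_le_sum (by simp) (Finset.mem_univ i))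
    rw [hg hjM, hz i j hj, eval_iterate_derivative_prod_X_sub_C_pow y mult hj]
    ring
  obtain ⟨ξ, hξ, hξ0⟩ := hgz.exists_iteratedDeriv_eq_zero
    ((contDiff_const.mul hf).sub (contDiff_const.mul (hqc M))) hI
  refine ⟨ξ, hξ, ?_⟩
  rw [hg le_rfl, hqM, eval_C] at hξ0
  rw [← hq_eval]
  linarith

theorem HasZerosWithMult.abs_le_pow_div_factorial_mul {f : ℝ → ℝ} {M : ℕ} {u v C θ : ℝ}
    (hf : ContDiff ℝ M f) (hz : HasZerosWithMult f (Icc u v) M)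
    (hC : ∀ x ∈ Icc u v, |iteratedDeriv M f x| ≤ C) (hθ : θ ∈ Icc u v) :
    |f θ| ≤ (v - u) ^ M / M ! * C := by
  obtain ⟨k, y, mult, hy, hyI, hpos, hsum, hz⟩ := hz
  obtain ⟨ξ, hξ, hfθ⟩ := exists_mul_factorial_eq_prod_mul_iteratedDeriv hf ordConnected_Icc y
    mult hy hyI hpos hsum hz hθ
  have hω : |∏ i, (θ - y i) ^ mult i| ≤ (v - u) ^ M := by
    rw [Finset.abs_prod, ← hsum, ← Finset.prod_pow_eq_pow_sum]
    gcongr with i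
    rw [abs_pow]
    gcongr
    exact abs_sub_le_of_le_of_le hθ.1 hθ.2 (hyI i).1 (hyI i).2
  have hM : (0 : ℝ) < M ! := by positivity
  calc |f θ| = |∏ i, (θ - y i) ^ mult i| * |iteratedDeriv M f ξ| / M ! := by
        rw [← abs_mul, ← hfθ, abs_mul, abs_of_pos hM, mul_div_cancel_right₀ _ hM.ne']
    _ ≤ (v - u) ^ M * C / M ! := by
        gcongr
        · exact (abs_nonneg _).trans hω
        · exact hC ξ hξ
    _ = (v - u) ^ M / M ! * C := by ring

theorem pow_self_div_factorial_le_exp_one_pow (m : ℕ) : (m : ℝ) ^ m / m ! ≤ exp 1 ^ m := by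
  simpa using Real.pow_div_factorial_le_exp _ m.cast_nonneg m

theorem mul_one_div_pow_succ {K : Type*} [DivisionRing K] {x : K} {j : ℕ} (hj : j ≠ 0) :
    x * (1 / x) ^ (j + 1) = (1 / x) ^ j := by
  rcases eq_or_ne x 0 with rfl | hx
  · simp [hj]
  · rw [pow_succ', ← mul_assoc, mul_one_div_cancel hx, one_mul]

theorem div_eight_exp_pow_div_factorial_le (m n : ℕ) :
    (1 / (8 * exp 1) * ((m : ℝ) / n)) ^ m / m ! ≤ (1 / 2) ^ m * (1 / (n : ℝ)) ^ m := by
  calc (1 / (8 * exp 1) * ((m : ℝ) / n)) ^ m / m !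
      = (m : ℝ) ^ m / m ! * (1 / (8 * exp 1)) ^ m * (1 / (n : ℝ)) ^ m := by ring
    _ ≤ exp 1 ^ m * (1 / (8 * exp 1)) ^ m * (1 / (n : ℝ)) ^ m := by
      gcongr; exact pow_self_div_factorial_le_exp_one_pow m
    _ = (1 / 8) ^ m * (1 / (n : ℝ)) ^ m := by
      rw [← mul_pow]; congr 2; field_simp
    _ ≤ (1 / 2) ^ m * (1 / (n : ℝ)) ^ m := by gcongr; norm_num

theorem div_eight_exp_pow_pred_div_factorial_le (m n : ℕ) (hm : 2 ≤ m) :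
    (1 / (8 * exp 1) * ((m : ℝ) / n)) ^ (m - 1) / (m - 1)! ≤
      n * (1 / 2) ^ (m - 1) * (1 / (n : ℝ)) ^ m := by
  obtain ⟨j, rfl⟩ : ∃ j, m = j + 1 := Nat.exists_eq_add_one.2 (by omega)
  rw [Nat.add_sub_cancel, mul_right_comm (n : ℝ), mul_one_div_pow_succ (by omega)]
  calc (1 / (8 * exp 1) * (((j + 1 : ℕ) : ℝ) / n)) ^ j / j !
      = ((j + 1 : ℕ) : ℝ) ^ (j + 1) / (j + 1)! * (1 / (8 * exp 1)) ^ j * (1 / (n : ℝ)) ^ j := by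
        have hj1 : ((j + 1 : ℕ) : ℝ) ≠ 0 := by positivity
        rw [Nat.factorial_succ, Nat.cast_mul, pow_succ, div_eq_mul_one_div _ (n : ℝ)]
        field_simp
        ring
    _ ≤ exp 1 ^ (j + 1) * (1 / (8 * exp 1)) ^ j * (1 / (n : ℝ)) ^ j := by
        gcongr; exact pow_self_div_factorial_le_exp_one_pow (j + 1)
    _ = exp 1 * (1 / 8) ^ j * (1 / (n : ℝ)) ^ j := by
        rw [pow_succ, mul_comm (exp 1 ^ j), mul_assoc (exp 1), ← mul_pow]
        congr 3; field_simp
    _ ≤ 4 ^ j * (1 / 8) ^ j * (1 / (n : ℝ)) ^ j := by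
        gcongr
        calc exp 1 ≤ 4 := by linarith [exp_one_lt_d9]
          _ ≤ 4 ^ j := le_self_pow₀ (by norm_num) (by omega)
    _ = (1 / (n : ℝ)) ^ j * (1 / 2) ^ j := by rw [mul_comm, ← mul_pow]; norm_num

theorem stmt7_general (n m : ℕ) (hm : 2 ≤ m) (a b : ℕ → ℝ) (P : ℝ → ℝ)
    (hP : ∀ x, P x = ∑ k ∈ Finset.range (n + 1),
      (a k * Real.cos (k * x) + b k * Real.sin (k * x)))
    (s t u v : ℝ)
    (hz : HasZerosWithMult P (Set.Icc s t) m)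
    (hlen' : v - u = 1 / (8 * Real.exp 1) * ((m : ℝ) / n))
    (hsub : Set.Icc s t ⊆ Set.Icc u v) :
    (∀ θ ∈ Set.Icc u v,
      |P θ| ≤ (1 / 2 : ℝ) ^ m * (1 / (n : ℝ)) ^ m *
        sSup ((fun x => |iteratedDeriv m P x|) '' Set.Icc u v)) ∧
    (∀ θ ∈ Set.Icc u v,
      |deriv P θ| ≤ (n : ℝ) * (1 / 2 : ℝ) ^ (m - 1) * (1 / (n : ℝ)) ^ m *
        sSup ((fun x => |iteratedDeriv m P x|) '' Set.Icc u v)) := by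
  have hPc : ContDiff ℝ ⊤ P := by
    rw [funext hP]
    fun_prop
  have hzuv := hz.mono hsub
  set S := sSup ((fun x => |iteratedDeriv m P x|) '' Set.Icc u v)
  have hS : ∀ x ∈ Icc u v, |iteratedDeriv m P x| ≤ S := fun x hx =>
    le_csSup (isCompact_Icc.image_of_continuousOn
      (hPc.continuous_iteratedDeriv m le_top).abs.continuousOn).bddAbove ⟨x, hx, rfl⟩
  obtain ⟨k, rfl⟩ : ∃ k, m = k + 1 := Nat.exists_eq_add_one.2 (by omega)
  have hS' : ∀ x ∈ Icc u v, |iteratedDeriv k (deriv P) x| ≤ S := by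
    simpa only [iteratedDeriv_succ'] using hS
  refine ⟨fun θ hθ => ?_, fun θ hθ => ?_⟩
  · calc |P θ| ≤ (v - u) ^ (k + 1) / (k + 1)! * S :=
          hzuv.abs_le_pow_div_factorial_mul (hPc.of_le le_top) hS hθ
      _ ≤ _ := by
          gcongr
          · exact (abs_nonneg _).trans (hS θ hθ)
          · exact hlen' ▸ div_eight_exp_pow_div_factorial_le _ n
  · calc |deriv P θ| ≤ (v - u) ^ k / k ! * S :=
          (hzuv.deriv hPc.continuous.continuousOn ordConnected_Icc).abs_le_pow_div_factorial_mul
            (hPc.of_le le_top).deriv' hS' hθ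
      _ ≤ _ := by
          gcongr
          · exact (abs_nonneg _).trans (hS θ hθ)
          · exact hlen' ▸ div_eight_exp_pow_pred_div_factorial_le _ n hm

theorem stmt7 (n m : ℕ) (hn : 0 < n) (hm : 2 ≤ m) (a b : ℕ → ℝ) (P : ℝ → ℝ)
    (hP : ∀ x, P x = ∑ k ∈ Finset.range (n + 1),
      (a k * Real.cos (k * x) + b k * Real.sin (k * x)))
    (s t u v : ℝ) (hst : s ≤ t)
    (hlen : t - s < 1 / (8 * Real.exp 1) * ((m : ℝ) / n))
    (hz : HasZerosWithMult P (Set.Icc s t) m)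
    (hlen' : v - u = 1 / (8 * Real.exp 1) * ((m : ℝ) / n))
    (hsub : Set.Icc s t ⊆ Set.Icc u v) :
    (∀ θ ∈ Set.Icc u v,
      |P θ| ≤ (1 / 2 : ℝ) ^ m * (1 / (n : ℝ)) ^ m *
        sSup ((fun x => |iteratedDeriv m P x|) '' Set.Icc u v)) ∧
    (∀ θ ∈ Set.Icc u v,
      |deriv P θ| ≤ (n : ℝ) * (1 / 2 : ℝ) ^ (m - 1) * (1 / (n : ℝ)) ^ m *
        sSup ((fun x => |iteratedDeriv m P x|) '' Set.Icc u v)) :=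
  stmt7_general n m hm a b P hP s t u v hz hlen' hsub
end

section
/- Let 0 < τ ≤ 1/64. There exist constants c > 0 and C₀'₀ (depending on τ) such that for every C₀' ≥ C₀'₀ the following holds for all sufficiently large n. Let t ∈ [−π,π] satisfy Condition(τ,C₀'), and let I = {a, a+1, …, a+L} ⊆ {1,…,n} be a set of consecutive integers with L ≥ n^{1−4τ}. Then for every unit vector e ∈ ℝ², ∑_{i∈I} ⟨e, v_i⟩² ≥ c L³/n² and ∑_{i∈I} ⟨e, v_i'⟩² ≥ c L³/n². -/
/-!
Expanding the square with the double-angle formulas, `∑ ⟨e, v_i⟩²` is a quadratic form in `e`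
with coefficients `∑ (1 + cos 2it)/2`, `-∑ (i/n) sin 2it` and `∑ (i/n)² (1 - cos 2it)/2` (for `v_i'`
the oscillating terms change sign). Condition with `k = 2` and Jordan's inequality give
`|sin t| > n^{-1+8τ}`, so by telescoping every partial sum of `cos 2it` and `sin 2it` is at most
`M = n^{1-8τ}`, and by Abel summation the oscillating parts are at most `2M` times the largest
weight. For large `n` we have `L ≥ n^{1-4τ} ≥ 24 M`, so the diagonal coefficients are of order `L`
and `L P²` with `P = (a+L)/n`, they dominate the off-diagonal one, and the form is at least
`L P² / 24 ≥ L³ / (24 n²)`.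
-/

open Real

/-- `t` satisfies Condition(τ, C₀'): there is no nonzero integer `k` with `|k| ≤ C₀'` such that
`‖kt/π‖_{ℝ/ℤ} ≤ n^{-1+8τ}`. -/
def Condition (n : ℕ) (τ C₀' t : ℝ) : Prop :=
  ∀ k : ℤ, k ≠ 0 → |(k : ℝ)| ≤ C₀' →
    ∀ m : ℤ, (n : ℝ) ^ (-1 + 8 * τ) < |(k : ℝ) * t / Real.pi - (m : ℝ)|

/-- `⟨v_i, x⟩` where `v_i = (cos(it), -(i/n) sin(it))`. -/
noncomputable def ipv (n : ℕ) (t : ℝ) (i : ℕ) (x : ℝ × ℝ) : ℝ :=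
  Real.cos (i * t) * x.1 + (-((i : ℝ) / n) * Real.sin (i * t)) * x.2

/-- `⟨v_i', x⟩` where `v_i' = (sin(it), (i/n) cos(it))`. -/
noncomputable def ipv' (n : ℕ) (t : ℝ) (i : ℕ) (x : ℝ × ℝ) : ℝ :=
  Real.sin (i * t) * x.1 + ((i : ℝ) / n) * Real.cos (i * t) * x.2

open Finset

lemma abs_sum_Icc_sub_le {f : ℕ → ℝ} {K : ℝ} (hf : ∀ i, |f i| ≤ K) (a b : ℕ) :
    |∑ i ∈ Icc a b, (f (i + 1) - f i)| ≤ 2 * K := by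
  rcases le_or_gt a b with hab | hab
  · rw [sum_Icc_sub hab]
    exact (abs_sub _ _).trans (by linarith [hf (b + 1), hf a])
  · have hK : 0 ≤ K := (abs_nonneg _).trans (hf 0)
    simp [Icc_eq_empty_of_lt hab, hK]

lemma abs_sin_mul_sum_cos_le (t : ℝ) (a b : ℕ) :
    |sin t * ∑ i ∈ Icc a b, cos (2 * (i * t))| ≤ 1 := by
  have htel : 2 * (sin t * ∑ i ∈ Icc a b, cos (2 * (i * t)))
      = ∑ i ∈ Icc a b, (sin ((2 * ((i + 1 : ℕ) : ℝ) - 1) * t) - sin ((2 * (i : ℝ) - 1) * t)) := by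
    rw [mul_sum, mul_sum]
    refine sum_congr rfl fun i _ => ?_
    rw [sin_sub_sin]
    push_cast
    ring_nf
  have := abs_sum_Icc_sub_le (fun i => abs_sin_le_one ((2 * (i : ℝ) - 1) * t)) a b
  rw [← htel, abs_mul, abs_two] at this
  linarith

lemma abs_sin_mul_sum_sin_le (t : ℝ) (a b : ℕ) :
    |sin t * ∑ i ∈ Icc a b, sin (2 * (i * t))| ≤ 1 := by
  have htel : 2 * (sin t * ∑ i ∈ Icc a b, sin (2 * (i * t)))
      = -∑ i ∈ Icc a b, (cos ((2 * ((i + 1 : ℕ) : ℝ) - 1) * t) - cos ((2 * (i : ℝ) - 1) * t)) := by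
    rw [mul_sum, mul_sum, ← sum_neg_distrib]
    refine sum_congr rfl fun i _ => ?_
    rw [cos_sub_cos]
    push_cast
    ring_nf
  have := abs_sum_Icc_sub_le (fun i => abs_cos_le_one ((2 * (i : ℝ) - 1) * t)) a b
  rw [← abs_neg, ← htel, abs_mul, abs_two] at this
  linarith

lemma abs_le_of_abs_mul_le_one {s S M : ℝ} (h : |s * S| ≤ 1) (hM : 1 ≤ M * |s|) : |S| ≤ M := by
  have hs : 0 < |s| := abs_pos.2 fun hs => by norm_num [hs] at hM
  rw [abs_mul] at h
  exact le_of_mul_le_mul_left (by linarith) hs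

lemma two_mul_abs_sub_round_le_abs_sin (x : ℝ) : 2 * |x / π - round (x / π)| ≤ |sin x| := by
  set y := x - round (x / π) * π
  have hy : y = π * (x / π - round (x / π)) := by
    simp only [y]; field_simp
  have hsin : |sin x| = |sin y| := by
    rw [sin_sub_int_mul_pi, abs_mul, abs_neg_one_zpow, one_mul]
  have hyπ : |y| ≤ π / 2 := by
    rw [hy, abs_mul, abs_of_pos pi_pos]
    nlinarith [abs_sub_round (x / π), pi_pos]
  calc 2 * |x / π - round (x / π)| = 2 / π * |y| := by
        rw [hy, abs_mul, abs_of_pos pi_pos]; field_simp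
    _ ≤ |sin x| := hsin ▸ mul_abs_le_abs_sin hyπ

lemma Condition.rpow_lt_abs_sin {n : ℕ} {τ C t : ℝ} (h : Condition n τ C t) (hC : 2 ≤ C) :
    (n : ℝ) ^ (-1 + 8 * τ) < |sin t| := by
  have h2 := h 2 two_ne_zero (by norm_num [hC]) (2 * round (t / π))
  calc (n : ℝ) ^ (-1 + 8 * τ) < |((2 : ℤ) : ℝ) * t / π - ((2 * round (t / π) : ℤ) : ℝ)| := h2
    _ = 2 * |t / π - round (t / π)| := by
        push_cast
        rw [← abs_two, ← abs_mul, abs_two]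
        ring_nf
    _ ≤ |sin t| := two_mul_abs_sub_round_le_abs_sin t

lemma eventually_const_mul_rpow_le_rpow (K : ℝ) {β γ : ℝ} (h : β < γ) :
    ∀ᶠ x : ℝ in Filter.atTop, K * x ^ β ≤ x ^ γ := by
  filter_upwards [(tendsto_rpow_atTop (sub_pos.2 h)).eventually_ge_atTop K,
    Filter.eventually_gt_atTop 0] with x hK hx
  calc K * x ^ β ≤ x ^ (γ - β) * x ^ β := by gcongr
    _ = x ^ γ := by rw [← rpow_add hx, sub_add_cancel]

lemma abs_sum_mul_le_of_monotone {w c : ℕ → ℝ} {M : ℝ} {a : ℕ} (hw : Monotone w) (hwa : 0 ≤ w a)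
    (hc : ∀ b, |∑ i ∈ Icc a b, c i| ≤ M) {b : ℕ} (hab : a ≤ b) :
    |∑ i ∈ Icc a b, w i * c i| ≤ 2 * w b * M := by
  have hM : 0 ≤ M := (abs_nonneg _).trans (hc a)
  have abel : ∀ k, a ≤ k →
      |∑ i ∈ Icc a k, w i * c i - w k * ∑ i ∈ Icc a k, c i| ≤ (w k - w a) * M := by
    intro k hk
    induction k, hk using Nat.le_induction with
    | base => simp
    | succ k hk ih =>
      have hstep : |(w (k + 1) - w k) * ∑ i ∈ Icc a k, c i| ≤ (w (k + 1) - w k) * M := by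
        rw [abs_mul, abs_of_nonneg (sub_nonneg.2 (hw k.le_succ))]
        exact mul_le_mul_of_nonneg_left (hc k) (sub_nonneg.2 (hw k.le_succ))
      rw [sum_Icc_succ_top (by omega), sum_Icc_succ_top (by omega)]
      calc _ = |(∑ i ∈ Icc a k, w i * c i - w k * ∑ i ∈ Icc a k, c i)
              - (w (k + 1) - w k) * ∑ i ∈ Icc a k, c i| := by ring_nf
        _ ≤ _ := abs_sub _ _
        _ ≤ (w (k + 1) - w a) * M := by linarith
  have hwb : 0 ≤ w b := hwa.trans (hw hab)
  have hlast : |w b * ∑ i ∈ Icc a b, c i| ≤ w b * M := by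
    rw [abs_mul, abs_of_nonneg hwb]
    exact mul_le_mul_of_nonneg_left (hc b) hwb
  calc |∑ i ∈ Icc a b, w i * c i|
      = |(∑ i ∈ Icc a b, w i * c i - w b * ∑ i ∈ Icc a b, c i) + w b * ∑ i ∈ Icc a b, c i| := by
        rw [sub_add_cancel]
    _ ≤ _ := abs_add_le _ _
    _ ≤ 2 * w b * M := by linarith [abel b hab, mul_nonneg hwa hM]

lemma mul_sq_le_three_mul_sum_sq (a L : ℕ) :
    L * (a + L) ^ 2 ≤ 3 * ∑ i ∈ Icc a (a + L), i ^ 2 := by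
  induction L with
  | zero => simp
  | succ L ih =>
    rw [← add_assoc, sum_Icc_succ_top (by omega)]
    nlinarith [Nat.mul_le_mul_right (2 * (a + L) + 1) (Nat.le_add_left L a)]

lemma mul_sq_le_three_mul_sum_sq_div (a L n : ℕ) :
    (L : ℝ) * ((a + L : ℕ) / n : ℝ) ^ 2 ≤ 3 * ∑ i ∈ Icc a (a + L), ((i : ℝ) / n) ^ 2 := by
  calc (L : ℝ) * ((a + L : ℕ) / n : ℝ) ^ 2 = (L * (a + L : ℕ) ^ 2 : ℕ) / (n : ℝ) ^ 2 := by
        push_cast; ring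
    _ ≤ (3 * ∑ i ∈ Icc a (a + L), i ^ 2 : ℕ) / (n : ℝ) ^ 2 := by
        gcongr ?_ / _; exact_mod_cast mul_sq_le_three_mul_sum_sq a L
    _ = 3 * ∑ i ∈ Icc a (a + L), ((i : ℝ) / n) ^ 2 := by
        push_cast; simp_rw [mul_div_assoc, sum_div, div_pow]

lemma le_quadratic_form {A B C D x y : ℝ} (hA : 0 < A - D)
    (hB : B ^ 2 ≤ 4 * (A - D) * (C - D)) (hxy : x ^ 2 + y ^ 2 = 1) :
    D ≤ A * x ^ 2 + B * (x * y) + C * y ^ 2 := by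
  have hpos : 0 ≤ (A - D) * x ^ 2 + B * (x * y) + (C - D) * y ^ 2 := by
    nlinarith [sq_nonneg (2 * (A - D) * x + B * y), mul_nonneg (sub_nonneg.2 hB) (sq_nonneg y)]
  linear_combination hpos - D * hxy

lemma le_quadratic_form_of_coeff_bounds {L P M A B C x y : ℝ} (hP : 0 ≤ P) (hP1 : P ≤ 1)
    (hM : 0 ≤ M) (hML : 24 * M ≤ L) (hA : (L + 1) / 2 - M / 2 ≤ A) (hB : |B| ≤ 2 * P * M)
    (hC : L * P ^ 2 / 6 - P ^ 2 * M ≤ C) (hxy : x ^ 2 + y ^ 2 = 1) :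
    L * P ^ 2 / 24 ≤ A * x ^ 2 + B * (x * y) + C * y ^ 2 := by
  have hL : 0 ≤ L := by linarith
  have hLP : L * P ^ 2 ≤ L := mul_le_of_le_one_right hL (pow_le_one₀ hP hP1)
  have hAD : L / 4 ≤ A - L * P ^ 2 / 24 := by linarith
  have hCD : L * P ^ 2 / 12 ≤ C - L * P ^ 2 / 24 := by
    nlinarith [mul_le_mul_of_nonneg_left hML (sq_nonneg P)]
  refine le_quadratic_form (by linarith) ?_ hxy
  calc B ^ 2 ≤ (2 * P * M) ^ 2 := sq_le_sq' (abs_le.1 hB).1 (abs_le.1 hB).2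
    _ ≤ 4 * (L / 4) * (L * P ^ 2 / 12) := by nlinarith [mul_le_mul hML hML (by positivity) hL]
    _ ≤ 4 * (A - L * P ^ 2 / 24) * (C - L * P ^ 2 / 24) := by
        rw [mul_assoc, mul_assoc]; gcongr; linarith

lemma le_sum_quadratic_form {n a L : ℕ} {M : ℝ} {c d : ℕ → ℝ}
    (hc : ∀ b, |∑ i ∈ Icc a b, c i| ≤ M) (hd : ∀ b, |∑ i ∈ Icc a b, d i| ≤ M)
    (hML : 24 * M ≤ L) (hn : a + L ≤ n) {x y : ℝ} (hxy : x ^ 2 + y ^ 2 = 1) :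
    1 / 24 * (L : ℝ) ^ 3 / (n : ℝ) ^ 2 ≤ ∑ i ∈ Icc a (a + L),
      ((1 + c i) / 2 * x ^ 2 + (i / n : ℝ) * d i * (x * y)
        + (i / n : ℝ) ^ 2 * (1 - c i) / 2 * y ^ 2) := by
  set w : ℕ → ℝ := fun i => i / n
  have hw0 : ∀ i, 0 ≤ w i := fun i => by positivity
  have hw : Monotone w := fun i j hij => by simp only [w]; gcongr
  have hw2 : Monotone (fun i => w i ^ 2) := fun i j hij => pow_le_pow_left₀ (hw0 i) (hw hij) 2
  have hA : ((L : ℝ) + 1) / 2 - M / 2 ≤ ∑ i ∈ Icc a (a + L), (1 + c i) / 2 := by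
    rw [← sum_div, sum_add_distrib, sum_const, Nat.card_Icc, show a + L + 1 - a = L + 1 by omega,
      nsmul_eq_mul, mul_one]
    push_cast
    linarith [(abs_le.1 (hc (a + L))).1]
  have hB : |∑ i ∈ Icc a (a + L), w i * d i| ≤ 2 * w (a + L) * M :=
    abs_sum_mul_le_of_monotone hw (hw0 a) hd (Nat.le_add_right a L)
  have hC : L * w (a + L) ^ 2 / 6 - w (a + L) ^ 2 * M
      ≤ ∑ i ∈ Icc a (a + L), w i ^ 2 * (1 - c i) / 2 := by
    have hsq := mul_sq_le_three_mul_sum_sq_div a L n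
    have hcos := (abs_le.1 (abs_sum_mul_le_of_monotone hw2 (sq_nonneg _) hc
      (Nat.le_add_right a L))).2
    simp_rw [mul_sub, mul_one, sub_div, sum_sub_distrib, ← sum_div]
    simp only [w] at hsq hcos ⊢
    linarith
  have hsplit : ∑ i ∈ Icc a (a + L), ((1 + c i) / 2 * x ^ 2 + (i / n : ℝ) * d i * (x * y)
        + (i / n : ℝ) ^ 2 * (1 - c i) / 2 * y ^ 2)
      = (∑ i ∈ Icc a (a + L), (1 + c i) / 2) * x ^ 2 + (∑ i ∈ Icc a (a + L), w i * d i) * (x * y)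
        + (∑ i ∈ Icc a (a + L), w i ^ 2 * (1 - c i) / 2) * y ^ 2 := by
    simp only [sum_add_distrib, sum_mul, w]
  have hLw : (L : ℝ) / n ≤ w (a + L) := by simp only [w]; gcongr; simp
  rw [hsplit]
  calc 1 / 24 * (L : ℝ) ^ 3 / (n : ℝ) ^ 2 = L * (L / n) ^ 2 / 24 := by ring
    _ ≤ L * w (a + L) ^ 2 / 24 := by gcongr
    _ ≤ _ := le_quadratic_form_of_coeff_bounds (hw0 _)
        (div_le_one_of_le₀ (by exact_mod_cast hn) (Nat.cast_nonneg n))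
        ((abs_nonneg _).trans (hc a)) hML hA hB hC hxy

lemma sq_ipv (n : ℕ) (t : ℝ) (i : ℕ) (e : ℝ × ℝ) :
    ipv n t i e ^ 2 = (1 + cos (2 * (i * t))) / 2 * e.1 ^ 2
      + (i / n : ℝ) * -sin (2 * (i * t)) * (e.1 * e.2)
      + (i / n : ℝ) ^ 2 * (1 - cos (2 * (i * t))) / 2 * e.2 ^ 2 := by
  rw [ipv, cos_two_mul, sin_two_mul]
  linear_combination ((i : ℝ) / n) ^ 2 * e.2 ^ 2 * sin_sq_add_cos_sq ((i : ℝ) * t)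

lemma sq_ipv' (n : ℕ) (t : ℝ) (i : ℕ) (e : ℝ × ℝ) :
    ipv' n t i e ^ 2 = (1 + -cos (2 * (i * t))) / 2 * e.1 ^ 2
      + (i / n : ℝ) * sin (2 * (i * t)) * (e.1 * e.2)
      + (i / n : ℝ) ^ 2 * (1 - -cos (2 * (i * t))) / 2 * e.2 ^ 2 := by
  rw [ipv', cos_two_mul, sin_two_mul]
  linear_combination e.1 ^ 2 * sin_sq_add_cos_sq ((i : ℝ) * t)

theorem stmt14_general (τ : ℝ) (hτ : 0 < τ) :
    ∃ c > (0:ℝ), ∃ C₀'₀ : ℝ, ∀ C₀' ≥ C₀'₀, ∃ n₀ : ℕ, ∀ n : ℕ, n₀ ≤ n →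
      ∀ t ∈ Set.Icc (-Real.pi) Real.pi, Condition n τ C₀' t →
      ∀ a L : ℕ, Finset.Icc a (a + L) ⊆ Finset.Icc 1 n → (n : ℝ) ^ (1 - 4 * τ) ≤ (L : ℝ) →
      ∀ e : ℝ × ℝ, e.1 ^ 2 + e.2 ^ 2 = 1 →
        c * (L : ℝ) ^ 3 / (n : ℝ) ^ 2 ≤ ∑ i ∈ Finset.Icc a (a + L), (ipv n t i e) ^ 2 ∧
        c * (L : ℝ) ^ 3 / (n : ℝ) ^ 2 ≤ ∑ i ∈ Finset.Icc a (a + L), (ipv' n t i e) ^ 2 := by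
  obtain ⟨n₀, hn₀⟩ := Filter.eventually_atTop.1 (tendsto_natCast_atTop_atTop.eventually
    (eventually_const_mul_rpow_le_rpow 24 (by linarith : 1 - 8 * τ < 1 - 4 * τ)))
  refine ⟨1 / 24, by norm_num, 2, fun C hC => ⟨n₀, fun n hn t _ hcond a L hsub hL e he => ?_⟩⟩
  have ha := mem_Icc.1 (hsub (left_mem_Icc.2 (Nat.le_add_right a L)))
  have haL := mem_Icc.1 (hsub (right_mem_Icc.2 (Nat.le_add_right a L)))
  have hn0 : (0 : ℝ) < n := by exact_mod_cast ha.1.trans ha.2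
  set M := (n : ℝ) ^ (1 - 8 * τ)
  have hsin : 1 ≤ M * |sin t| :=
    calc 1 = M * (n : ℝ) ^ (-1 + 8 * τ) := by rw [← rpow_add hn0]; norm_num
      _ ≤ M * |sin t| := by gcongr; exact (hcond.rpow_lt_abs_sin hC).le
  have hcos_sum : ∀ b, |∑ i ∈ Icc a b, cos (2 * (i * t))| ≤ M := fun b =>
    abs_le_of_abs_mul_le_one (abs_sin_mul_sum_cos_le t a b) hsin
  have hsin_sum : ∀ b, |∑ i ∈ Icc a b, sin (2 * (i * t))| ≤ M := fun b =>
    abs_le_of_abs_mul_le_one (abs_sin_mul_sum_sin_le t a b) hsin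
  have hML : 24 * M ≤ L := (hn₀ n hn).trans hL
  rw [sum_congr rfl fun i _ => sq_ipv n t i e, sum_congr rfl fun i _ => sq_ipv' n t i e]
  constructor
  · exact le_sum_quadratic_form hcos_sum (by simpa only [sum_neg_distrib, abs_neg] using hsin_sum)
      hML haL.2 he
  · exact le_sum_quadratic_form (by simpa only [sum_neg_distrib, abs_neg] using hcos_sum) hsin_sum
      hML haL.2 he

theorem stmt14 (τ : ℝ) (hτ : 0 < τ) (hτ' : τ ≤ 1 / 64) :
    ∃ c > (0:ℝ), ∃ C₀'₀ : ℝ, ∀ C₀' ≥ C₀'₀, ∃ n₀ : ℕ, ∀ n : ℕ, n₀ ≤ n →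
      ∀ t ∈ Set.Icc (-Real.pi) Real.pi, Condition n τ C₀' t →
      ∀ a L : ℕ, Finset.Icc a (a + L) ⊆ Finset.Icc 1 n → (n : ℝ) ^ (1 - 4 * τ) ≤ (L : ℝ) →
      ∀ e : ℝ × ℝ, e.1 ^ 2 + e.2 ^ 2 = 1 →
        c * (L : ℝ) ^ 3 / (n : ℝ) ^ 2 ≤ ∑ i ∈ Finset.Icc a (a + L), (ipv n t i e) ^ 2 ∧
        c * (L : ℝ) ^ 3 / (n : ℝ) ^ 2 ≤ ∑ i ∈ Finset.Icc a (a + L), (ipv' n t i e) ^ 2 :=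
  stmt14_general τ hτ
end

section
/- Let 0 < τ ≤ 1/64. There exists a constant C₀'₀ (depending on τ) such that for every C₀' ≥ C₀'₀ the following holds for all sufficiently large n. Let t ∈ [−π,π] satisfy Condition(τ,C₀'), and let I = {a, a+1, …, a+L} ⊆ {1,…,n} be a set of consecutive integers with L ≥ n^{1−4τ}. Then for every choice of signs ε₁, ε₂ ∈ {−1, 1} and every positive integer A₀ ≤ √(C₀'), there exists i ∈ I such that ε₁ · sin(i A₀ t) > 0 and ε₂ · cos(i A₀ t) > 0. -/
/-!
Put `α = A₀ t / (2π)`. Dirichlet's theorem gives `q ≤ √C₀'` and an integer `m` with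
`β = qα - m` of size at most `1 / (⌊√C₀'⌋ + 1)`, while Condition for `k = qA₀` keeps `|β|` above
`n^{-1+8τ} / 2`. Along the progression `a, a + q, a + 2q, …` inside `I`, the numbers `iα` move
modulo `1` by the small steps `β`; since `L |β| ≳ n^{4τ}` is large compared with `q`, they sweep a
whole period and so enter every interval of length `1/4` modulo `1`, in particular the quarter
period on which `sin` and `cos` have the prescribed signs.
-/

open Real

open Set

lemma exists_add_mul_mem_Ioo_add_int_of_pos {β w : ℝ} (hβ : 0 < β) (hβw : β < w) {M : ℕ}
    (hM : 1 + β ≤ M * β) (x₀ c : ℝ) :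
    ∃ j ≤ M, ∃ p : ℤ, x₀ + j * β ∈ Ioo (c + p) (c + p + w) := by
  set p : ℤ := ⌈x₀ - c⌉
  have hp : x₀ - c ≤ p ∧ (p : ℝ) < x₀ - c + 1 := ⟨Int.le_ceil _, Int.ceil_lt_add_one _⟩
  -- `j` is the first index at which the progression passes `c + p`.
  set j : ℕ := ⌊(c + p - x₀) / β⌋₊ + 1
  have hj : (c + p - x₀) / β < j ∧ (j : ℝ) ≤ (c + p - x₀) / β + 1 := by
    have := Nat.floor_le (div_nonneg (by linarith) hβ.le : 0 ≤ (c + p - x₀) / β)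
    exact ⟨by push_cast [j]; exact Nat.lt_floor_add_one _, by push_cast [j]; linarith⟩
  rw [div_lt_iff₀ hβ, ← sub_le_iff_le_add, le_div_iff₀ hβ] at hj
  refine ⟨j, ?_, p, by constructor <;> nlinarith⟩
  exact_mod_cast le_of_mul_le_mul_right (by nlinarith : (j : ℝ) * β ≤ M * β) hβ

lemma exists_add_mul_mem_Ioo_add_int {β w : ℝ} (hβ : 0 < |β|) (hβw : |β| < w) {M : ℕ}
    (hM : 1 + |β| ≤ M * |β|) (x₀ c : ℝ) :
    ∃ j ≤ M, ∃ p : ℤ, x₀ + j * β ∈ Ioo (c + p) (c + p + w) := by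
  rcases le_or_gt 0 β with h | h
  · rw [abs_of_nonneg h] at hβ hβw hM
    exact exists_add_mul_mem_Ioo_add_int_of_pos hβ hβw hM x₀ c
  · rw [abs_of_neg h] at hβ hβw hM
    obtain ⟨j, hjM, p, hp⟩ := exists_add_mul_mem_Ioo_add_int_of_pos hβ hβw hM (-x₀) (-c - w)
    refine ⟨j, hjM, -p, ?_⟩
    push_cast
    constructor <;> linarith [hp.1, hp.2]

lemma exists_shift_sin_cos_sign_pos {ε₁ ε₂ : ℝ} (hε₁ : ε₁ = -1 ∨ ε₁ = 1)
    (hε₂ : ε₂ = -1 ∨ ε₂ = 1) :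
    ∃ φ : ℝ, ∀ θ ∈ Ioo 0 (π / 2), 0 < ε₁ * sin (θ + φ) ∧ 0 < ε₂ * cos (θ + φ) := by
  have hsin_cos : ∀ θ ∈ Ioo 0 (π / 2), 0 < sin θ ∧ 0 < cos θ := fun θ hθ =>
    ⟨sin_pos_of_pos_of_lt_pi hθ.1 (by linarith [hθ.2, pi_pos]),
      cos_pos_of_mem_Ioo ⟨by linarith [hθ.1, pi_pos], hθ.2⟩⟩
  rcases hε₁ with rfl | rfl <;> rcases hε₂ with rfl | rfl
  · exact ⟨π, fun θ hθ => by simpa [sin_add_pi, cos_add_pi] using hsin_cos θ hθ⟩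
  · exact ⟨-(π / 2), fun θ hθ => by
      simpa [← sub_eq_add_neg, sin_sub_pi_div_two, cos_sub_pi_div_two] using (hsin_cos θ hθ).symm⟩
  · exact ⟨π / 2, fun θ hθ => by
      simpa [sin_add_pi_div_two, cos_add_pi_div_two] using (hsin_cos θ hθ).symm⟩
  · exact ⟨0, fun θ hθ => by simpa using hsin_cos θ hθ⟩

lemma exists_sin_cos_sign_pos_of_mem_Ioo {ε₁ ε₂ : ℝ} (hε₁ : ε₁ = -1 ∨ ε₁ = 1)
    (hε₂ : ε₂ = -1 ∨ ε₂ = 1) :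
    ∃ c : ℝ, ∀ (x : ℝ) (p : ℤ), x ∈ Ioo (c + p) (c + p + 1 / 4) →
      0 < ε₁ * sin (2 * π * x) ∧ 0 < ε₂ * cos (2 * π * x) := by
  obtain ⟨φ, hφ⟩ := exists_shift_sin_cos_sign_pos hε₁ hε₂
  refine ⟨φ / (2 * π), fun x p hx => ?_⟩
  have hπ := pi_pos
  have hx' : 2 * π * x = 2 * π * (x - φ / (2 * π) - p) + φ + p * (2 * π) := by
    field_simp; ring
  rw [hx', sin_add_int_mul_two_pi, cos_add_int_mul_two_pi]
  apply hφ
  constructor <;> nlinarith [hx.1, hx.2]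

lemma exists_mem_Icc_mul_mem_Ioo_add_int {α w : ℝ} {q : ℕ} {m : ℤ} (hq : 0 < q)
    (hβ : 0 < |q * α - m|) (hβw : |q * α - m| < w) {L : ℕ}
    (hL : q * (1 + 2 * |q * α - m|) ≤ L * |q * α - m|) (a : ℕ) (c : ℝ) :
    ∃ i ∈ Finset.Icc a (a + L), ∃ p : ℤ, i * α ∈ Ioo (c + p) (c + p + w) := by
  set β := q * α - m
  have hqM : (L : ℝ) < q * (L / q : ℕ) + q := by
    exact_mod_cast (Nat.lt_div_mul_add hq).trans_eq (by ring)
  have hM : 1 + |β| ≤ (L / q : ℕ) * |β| := by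
    have hq' : (0 : ℝ) < q := by exact_mod_cast hq
    refine le_of_mul_le_mul_left ?_ hq'
    nlinarith
  obtain ⟨j, hj, p, hp⟩ := exists_add_mul_mem_Ioo_add_int hβ hβw hM (a * α) c
  refine ⟨a + j * q, ?_, p + j * m, ?_⟩
  · simp only [Finset.mem_Icc, le_add_iff_nonneg_right, zero_le, add_le_add_iff_left, true_and]
    exact (Nat.mul_le_mul_right q hj).trans (Nat.div_mul_le_self L q)
  · have hiα : ((a + j * q : ℕ) : ℝ) * α = a * α + j * β + (p + j * m : ℤ) - p := by
      push_cast [β]; ring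
    rw [hiα]
    constructor <;> linarith [hp.1, hp.2]

lemma Condition.half_lt_abs_mul_sub {n : ℕ} {τ C₀' t : ℝ} (h : Condition n τ C₀' t) {k : ℤ}
    (hk : k ≠ 0) (hkC : |(k : ℝ)| ≤ C₀') (m : ℤ) :
    (n : ℝ) ^ (-1 + 8 * τ) / 2 < |k * (t / (2 * π)) - m| := by
  have := h k hk hkC (2 * m)
  rw [show (k : ℝ) * t / π - ((2 * m : ℤ) : ℝ) = 2 * (k * (t / (2 * π)) - m) by
    push_cast; field_simp, abs_mul, abs_two] at this
  linarith

lemma Condition.exists_nat_mul_near_int {n : ℕ} {τ C₀' t : ℝ} (h : Condition n τ C₀' t)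
    {A₀ K : ℕ} (hA₀ : 0 < A₀) (hK : 0 < K) (hKA₀ : (K : ℝ) * A₀ ≤ C₀') :
    ∃ q : ℕ, 0 < q ∧ q ≤ K ∧ ∃ m : ℤ,
      (n : ℝ) ^ (-1 + 8 * τ) / 2 < |q * (A₀ * t / (2 * π)) - m| ∧
      |q * (A₀ * t / (2 * π)) - m| ≤ 1 / (K + 1) := by
  obtain ⟨q, hq, hqK, hβK⟩ := Real.exists_nat_abs_mul_sub_round_le (A₀ * t / (2 * π)) hK
  refine ⟨q, hq, hqK, _, ?_, hβK⟩
  have hqA₀ : |((q * A₀ : ℤ) : ℝ)| ≤ C₀' := by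
    have : (q : ℝ) ≤ K := by exact_mod_cast hqK
    push_cast
    rw [abs_of_nonneg (by positivity)]
    exact (mul_le_mul_of_nonneg_right this (by positivity)).trans hKA₀
  convert h.half_lt_abs_mul_sub (by positivity) hqA₀ (round (q * (A₀ * t / (2 * π)))) using 3
  push_cast; ring

theorem stmt15_general (τ : ℝ) (hτ : 0 < τ) :
    ∃ C₀'₀ : ℝ, ∀ C₀' ≥ C₀'₀, ∃ n₀ : ℕ, ∀ n : ℕ, n₀ ≤ n →
      ∀ t ∈ Set.Icc (-Real.pi) Real.pi, Condition n τ C₀' t →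
      ∀ a L : ℕ, Finset.Icc a (a + L) ⊆ Finset.Icc 1 n → (n : ℝ) ^ (1 - 4 * τ) ≤ (L : ℝ) →
      ∀ ε₁ ε₂ : ℝ, (ε₁ = -1 ∨ ε₁ = 1) → (ε₂ = -1 ∨ ε₂ = 1) →
      ∀ A₀ : ℕ, 0 < A₀ → (A₀ : ℝ) ≤ Real.sqrt C₀' →
        ∃ i ∈ Finset.Icc a (a + L),
          0 < ε₁ * Real.sin ((i : ℝ) * A₀ * t) ∧ 0 < ε₂ * Real.cos ((i : ℝ) * A₀ * t) := by
  refine ⟨16, fun C₀' hC₀' => ?_⟩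
  set K := ⌊√C₀'⌋₊
  have hK : 4 ≤ K := Nat.le_floor <| by
    rw [Nat.cast_ofNat, show (4 : ℝ) = √16 by norm_num]; exact sqrt_le_sqrt hC₀'
  have hKC : (K : ℝ) ≤ √C₀' := Nat.floor_le (sqrt_nonneg _)
  obtain ⟨n₀, hn₀⟩ := Filter.eventually_atTop.1 <|
    ((tendsto_rpow_atTop (by positivity : 0 < 4 * τ)).comp
      tendsto_natCast_atTop_atTop).eventually_ge_atTop (3 * √C₀')
  refine ⟨n₀, fun n hn t _ hcond a L _ hL ε₁ ε₂ hε₁ hε₂ A₀ hA₀ hA₀C => ?_⟩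
  obtain ⟨q, hq, hqK, m, hβ, hβK⟩ := hcond.exists_nat_mul_near_int (K := K) hA₀ (by omega) <| by
    rw [← mul_self_sqrt (by linarith : (0 : ℝ) ≤ C₀')]
    exact mul_le_mul hKC hA₀C (by positivity) (sqrt_nonneg _)
  set β := q * (A₀ * t / (2 * π)) - m
  have hβ4 : |β| < 1 / 4 := hβK.trans_lt <| one_div_lt_one_div_of_lt (by norm_num) <| by
    exact_mod_cast (by omega : 4 < K + 1)
  have hLβ : (n : ℝ) ^ (4 * τ) ≤ L * (2 * |β|) := calc
    (n : ℝ) ^ (4 * τ) = n ^ (1 - 4 * τ) * n ^ (-1 + 8 * τ) := by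
      rw [← rpow_add' (Nat.cast_nonneg n) (by linarith)]; ring_nf
    _ ≤ L * (2 * |β|) := by gcongr; linarith
  have hqL : q * (1 + 2 * |β|) ≤ L * |β| := by
    have : (q : ℝ) ≤ K := by exact_mod_cast hqK
    have hn : 3 * √C₀' ≤ (n : ℝ) ^ (4 * τ) := hn₀ n hn
    nlinarith [abs_nonneg β]
  obtain ⟨c, hc⟩ := exists_sin_cos_sign_pos_of_mem_Ioo hε₁ hε₂
  obtain ⟨i, hi, p, hip⟩ :=
    exists_mem_Icc_mul_mem_Ioo_add_int hq ((by positivity : (0 : ℝ) ≤ _).trans_lt hβ) hβ4 hqL a c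
  refine ⟨i, hi, ?_⟩
  convert hc _ p hip using 3 <;> field_simp

theorem stmt15 (τ : ℝ) (hτ : 0 < τ) (hτ' : τ ≤ 1 / 64) :
    ∃ C₀'₀ : ℝ, ∀ C₀' ≥ C₀'₀, ∃ n₀ : ℕ, ∀ n : ℕ, n₀ ≤ n →
      ∀ t ∈ Set.Icc (-Real.pi) Real.pi, Condition n τ C₀' t →
      ∀ a L : ℕ, Finset.Icc a (a + L) ⊆ Finset.Icc 1 n → (n : ℝ) ^ (1 - 4 * τ) ≤ (L : ℝ) →
      ∀ ε₁ ε₂ : ℝ, (ε₁ = -1 ∨ ε₁ = 1) → (ε₂ = -1 ∨ ε₂ = 1) →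
      ∀ A₀ : ℕ, 0 < A₀ → (A₀ : ℝ) ≤ Real.sqrt C₀' →
        ∃ i ∈ Finset.Icc a (a + L),
          0 < ε₁ * Real.sin ((i : ℝ) * A₀ * t) ∧ 0 < ε₂ * Real.cos ((i : ℝ) * A₀ * t) :=
  stmt15_general τ hτ
end

section
/- (Separation lemma) Let μ, ν > 0, let I = (a,b) be an open interval with b − a > 2μ/ν, and let f be a C¹ function on I such that at each point x ∈ I either |f(x)| > μ or |f'(x)| > ν. Let Z = { x ∈ I : f(x) = 0, x − a > μ/ν, b − x > μ/ν }. Then there exist functions a', b' : Z → ℝ such that for every x₀ ∈ Z: x₀ − μ/ν < a'(x₀) < x₀ < b'(x₀) < x₀ + μ/ν, f(a'(x₀)) · f(b'(x₀)) < 0, |f(a'(x₀))| = |f(b'(x₀))| = μ, and the open intervals (a'(x₀), b'(x₀)) for distinct points of Z are pairwise disjoint. -/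
/-!
Around a zero `x₀` of `f`, take the nearest points `A < x₀ < B` where `|f|` reaches `μ`. On
`[A, B]` we have `|f| ≤ μ`, so `|f'| > ν` there; by the mean value theorem `f` cannot climb from
`0` to `±μ` in time `μ / ν`, which keeps `A` and `B` within `μ / ν` of `x₀`. By Darboux's theorem
`f'` has constant sign on `[A, B]`, so `f` is strictly monotone there: `f A` and `f B` have
opposite signs and `x₀` is the only zero in `(A, B)`. Finally `(A, B)` is a maximal interval on
which `|f| < μ`, and two such intervals either coincide or are disjoint.
-/

open Set

theorem strictMonoOn_or_strictAntiOn_of_hasDerivAt_ne_zero {f f' : ℝ → ℝ} {s : Set ℝ}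
    (hs : Convex ℝ s) (hf : ∀ x ∈ s, HasDerivAt f (f' x) x) (hf' : ∀ x ∈ s, f' x ≠ 0) :
    StrictMonoOn f s ∨ StrictAntiOn f s := by
  have hcont : ContinuousOn f s := fun x hx => (hf x hx).continuousAt.continuousWithinAt
  have hint : ∀ x ∈ interior s, HasDerivWithinAt f (f' x) (interior s) x :=
    fun x hx => (hf x (interior_subset hx)).hasDerivWithinAt
  rcases hasDerivWithinAt_forall_lt_or_forall_gt_of_forall_ne hs
      (fun x hx => (hf x hx).hasDerivWithinAt) hf' with hneg | hpos
  · exact .inr <| strictAntiOn_of_hasDerivWithinAt_neg hs hcont hint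
      fun x hx => hneg x (interior_subset hx)
  · exact .inl <| strictMonoOn_of_hasDerivWithinAt_pos hs hcont hint
      fun x hx => hpos x (interior_subset hx)

theorem mul_sub_lt_abs_sub_of_lt_abs_deriv {f f' : ℝ → ℝ} {ν x y : ℝ} (hxy : x < y)
    (hf : ∀ t ∈ Icc x y, HasDerivAt f (f' t) t) (hf' : ∀ t ∈ Ioo x y, ν < |f' t|) :
    ν * (y - x) < |f y - f x| := by
  obtain ⟨ξ, hξ, hslope⟩ := exists_hasDerivAt_eq_slope f f' hxy
    (fun t ht => (hf t ht).continuousAt.continuousWithinAt)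
    (fun t ht => hf t (Ioo_subset_Icc_self ht))
  have hyx : 0 < y - x := sub_pos.2 hxy
  calc ν * (y - x) < |f' ξ| * (y - x) := mul_lt_mul_of_pos_right (hf' ξ hξ) hyx
    _ = |f y - f x| := by rw [hslope, abs_div, abs_of_pos hyx, div_mul_cancel₀ _ hyx.ne']

theorem endpoints_eq_of_not_disjoint_Ioo {U : Set ℝ} {a b c d : ℝ} (hab : Ioo a b ⊆ U)
    (hcd : Ioo c d ⊆ U) (ha : a ∉ U) (hb : b ∉ U) (hc : c ∉ U) (hd : d ∉ U)
    (h : ¬Disjoint (Ioo a b) (Ioo c d)) : a = c ∧ b = d := by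
  obtain ⟨t, ⟨hat, htb⟩, hct, htd⟩ := not_disjoint_iff.1 h
  exact ⟨le_antisymm (not_lt.1 fun h => ha (hcd ⟨h, hat.trans htd⟩))
      (not_lt.1 fun h => hc (hab ⟨h, hct.trans htb⟩)),
    le_antisymm (not_lt.1 fun h => hd (hab ⟨hat.trans htd, h⟩))
      (not_lt.1 fun h => hb (hcd ⟨hct.trans htb, h⟩))⟩

section SeparatingInterval

variable {f f' : ℝ → ℝ} {μ ν x₀ : ℝ}

theorem exists_first_abs_eq_right (hμ : 0 < μ) (hν : 0 < ν)
    (hf : ∀ x ∈ Icc x₀ (x₀ + μ / ν), HasDerivAt f (f' x) x)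
    (hrep : ∀ x ∈ Icc x₀ (x₀ + μ / ν), μ < |f x| ∨ ν < |f' x|) (h0 : f x₀ = 0) :
    ∃ B ∈ Ioo x₀ (x₀ + μ / ν), |f B| = μ ∧ ∀ t ∈ Ico x₀ B, |f t| < μ := by
  set c := x₀ + μ / ν
  have hx₀c : x₀ < c := lt_add_of_pos_right _ (div_pos hμ hν)
  have hcont : ContinuousOn (fun t => |f t|) (Icc x₀ c) :=
    fun x hx => (hf x hx).continuousAt.continuousWithinAt.abs
  have hlower : ∀ y ∈ Ioc x₀ c, (∀ t ∈ Ico x₀ y, |f t| < μ) → ν * (y - x₀) < |f y| := by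
    intro y hy hsmall
    have := mul_sub_lt_abs_sub_of_lt_abs_deriv hy.1 (fun t ht => hf t ⟨ht.1, ht.2.trans hy.2⟩)
      fun t ht => (hrep t ⟨ht.1.le, ht.2.le.trans hy.2⟩).resolve_left
        (hsmall t ⟨ht.1.le, ht.2⟩).not_gt
    rwa [h0, sub_zero] at this
  set S := {t ∈ Icc x₀ c | μ ≤ |f t|}
  have hS : IsCompact S :=
    isCompact_Icc.of_isClosed_subset (isClosed_Icc.isClosed_le continuousOn_const hcont)
      (sep_subset _ _)
  have hSne : S.Nonempty := by
    by_contra hempty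
    have hsmall : ∀ t ∈ Ico x₀ c, |f t| < μ :=
      fun t ht => lt_of_not_ge fun h => hempty ⟨t, Ico_subset_Icc_self ht, h⟩
    have hc := hlower c ⟨hx₀c, le_rfl⟩ hsmall
    rw [show c - x₀ = μ / ν by ring, mul_div_cancel₀ _ hν.ne'] at hc
    exact hempty ⟨c, right_mem_Icc.2 hx₀c.le, hc.le⟩
  obtain ⟨B, ⟨hBI, hμB⟩, hBleast⟩ := hS.exists_isLeast hSne
  have hsmall : ∀ t ∈ Ico x₀ B, |f t| < μ := fun t ht =>
    lt_of_not_ge fun h => (hBleast ⟨⟨ht.1, ht.2.le.trans hBI.2⟩, h⟩).not_gt ht.2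
  have hx₀B : x₀ < B := hBI.1.lt_of_ne <| by
    rintro rfl
    rw [h0, abs_zero] at hμB
    exact hμB.not_gt hμ
  have hfB : |f B| = μ := by
    refine le_antisymm ?_ hμB
    refine le_on_closure (fun t ht => (hsmall t ht).le) ?_ continuousOn_const ?_
    · rw [closure_Ico hx₀B.ne]
      exact hcont.mono (Icc_subset_Icc_right hBI.2)
    · rw [closure_Ico hx₀B.ne]
      exact right_mem_Icc.2 hx₀B.le
  have hBc : ν * (B - x₀) < ν * (μ / ν) := by
    rw [mul_div_cancel₀ _ hν.ne', ← hfB]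
    exact hlower B ⟨hx₀B, hBI.2⟩ hsmall
  exact ⟨B, ⟨hx₀B, by linarith [lt_of_mul_lt_mul_left hBc hν.le]⟩, hfB, hsmall⟩

theorem exists_last_abs_eq_left (hμ : 0 < μ) (hν : 0 < ν)
    (hf : ∀ x ∈ Icc (x₀ - μ / ν) x₀, HasDerivAt f (f' x) x)
    (hrep : ∀ x ∈ Icc (x₀ - μ / ν) x₀, μ < |f x| ∨ ν < |f' x|) (h0 : f x₀ = 0) :
    ∃ A ∈ Ioo (x₀ - μ / ν) x₀, |f A| = μ ∧ ∀ t ∈ Ioc A x₀, |f t| < μ := by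
  have hneg : ∀ x ∈ Icc (-x₀) (-x₀ + μ / ν), -x ∈ Icc (x₀ - μ / ν) x₀ :=
    fun x hx => ⟨by linarith [hx.2], by linarith [hx.1]⟩
  obtain ⟨B, hB, hfB, hsmall⟩ := exists_first_abs_eq_right (f := fun t => f (-t))
    (f' := fun t => -f' (-t)) hμ hν
    (fun x hx => by
      simpa [Function.comp_def] using (hf (-x) (hneg x hx)).comp x (hasDerivAt_neg x))
    (fun x hx => by simpa using hrep (-x) (hneg x hx)) (by simpa using h0)
  refine ⟨-B, ⟨by linarith [hB.2], by linarith [hB.1]⟩, hfB, fun t ht => ?_⟩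
  simpa using hsmall (-t) ⟨by linarith [ht.2], by linarith [ht.1]⟩

theorem exists_separating_interval (hμ : 0 < μ) (hν : 0 < ν)
    (hf : ∀ x ∈ Icc (x₀ - μ / ν) (x₀ + μ / ν), HasDerivAt f (f' x) x)
    (hrep : ∀ x ∈ Icc (x₀ - μ / ν) (x₀ + μ / ν), μ < |f x| ∨ ν < |f' x|) (h0 : f x₀ = 0) :
    ∃ A B, x₀ - μ / ν < A ∧ A < x₀ ∧ x₀ < B ∧ B < x₀ + μ / ν ∧ f A * f B < 0 ∧
      |f A| = μ ∧ |f B| = μ ∧ (∀ t ∈ Ioo A B, |f t| < μ) ∧ InjOn f (Icc A B) := by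
  have hε : 0 ≤ μ / ν := (div_pos hμ hν).le
  obtain ⟨A, ⟨hεA, hAx₀⟩, hfA, hsmallA⟩ := exists_last_abs_eq_left hμ hν
    (fun x hx => hf x ⟨hx.1, hx.2.trans (by linarith)⟩)
    (fun x hx => hrep x ⟨hx.1, hx.2.trans (by linarith)⟩) h0
  obtain ⟨B, ⟨hx₀B, hBε⟩, hfB, hsmallB⟩ := exists_first_abs_eq_right hμ hν
    (fun x hx => hf x ⟨(by linarith : x₀ - μ / ν ≤ x₀).trans hx.1, hx.2⟩)
    (fun x hx => hrep x ⟨(by linarith : x₀ - μ / ν ≤ x₀).trans hx.1, hx.2⟩) h0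
  have hsub : Icc A B ⊆ Icc (x₀ - μ / ν) (x₀ + μ / ν) := Icc_subset_Icc hεA.le hBε.le
  have hsmall : ∀ t ∈ Ioo A B, |f t| < μ := fun t ht =>
    (le_or_gt t x₀).elim (fun h => hsmallA t ⟨ht.1, h⟩) fun h => hsmallB t ⟨h.le, ht.2⟩
  have hle : ∀ t ∈ Icc A B, |f t| ≤ μ := by
    intro t ht
    rcases ht.1.eq_or_lt with rfl | hAt
    · exact hfA.le
    rcases ht.2.eq_or_lt with rfl | htB
    · exact hfB.le
    exact (hsmall t ⟨hAt, htB⟩).le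
  have hf'ne : ∀ t ∈ Icc A B, f' t ≠ 0 := fun t ht h => by
    have := (hrep t (hsub ht)).resolve_left (hle t ht).not_gt
    rw [h, abs_zero] at this
    exact this.not_gt hν
  have hx₀I : x₀ ∈ Icc A B := ⟨hAx₀.le, hx₀B.le⟩
  have hAI : A ∈ Icc A B := left_mem_Icc.2 (hAx₀.trans hx₀B).le
  have hBI : B ∈ Icc A B := right_mem_Icc.2 (hAx₀.trans hx₀B).le
  rcases strictMonoOn_or_strictAntiOn_of_hasDerivAt_ne_zero (convex_Icc A B)
    (fun t ht => hf t (hsub ht)) hf'ne with hmono | hanti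
  · have hA := hmono hAI hx₀I hAx₀
    have hB := hmono hx₀I hBI hx₀B
    rw [h0] at hA hB
    exact ⟨A, B, hεA, hAx₀, hx₀B, hBε, mul_neg_of_neg_of_pos hA hB, hfA, hfB, hsmall,
      hmono.injOn⟩
  · have hA := hanti hAI hx₀I hAx₀
    have hB := hanti hx₀I hBI hx₀B
    rw [h0] at hA hB
    exact ⟨A, B, hεA, hAx₀, hx₀B, hBε, mul_neg_of_pos_of_neg hA hB, hfA, hfB, hsmall,
      hanti.injOn⟩

end SeparatingInterval

theorem stmt18_general (μ ν a b : ℝ) (hμ : 0 < μ) (hν : 0 < ν)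
    (f f' : ℝ → ℝ)
    (hderiv : ∀ x ∈ Set.Ioo a b, HasDerivAt f (f' x) x)
    (hrep : ∀ x ∈ Set.Ioo a b, μ < |f x| ∨ ν < |f' x|) :
    ∃ A B : ℝ → ℝ,
      (∀ x₀, x₀ ∈ Set.Ioo a b → f x₀ = 0 → μ / ν < x₀ - a → μ / ν < b - x₀ →
        x₀ - μ / ν < A x₀ ∧ A x₀ < x₀ ∧ x₀ < B x₀ ∧ B x₀ < x₀ + μ / ν ∧
        f (A x₀) * f (B x₀) < 0 ∧ |f (A x₀)| = μ ∧ |f (B x₀)| = μ) ∧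
      (∀ x₀ y₀, x₀ ∈ Set.Ioo a b → f x₀ = 0 → μ / ν < x₀ - a → μ / ν < b - x₀ →
        y₀ ∈ Set.Ioo a b → f y₀ = 0 → μ / ν < y₀ - a → μ / ν < b - y₀ →
        x₀ ≠ y₀ →
        Disjoint (Set.Ioo (A x₀) (B x₀)) (Set.Ioo (A y₀) (B y₀))) := by
  have key : ∀ x₀, x₀ ∈ Ioo a b → f x₀ = 0 → μ / ν < x₀ - a → μ / ν < b - x₀ →
      ∃ A B, x₀ - μ / ν < A ∧ A < x₀ ∧ x₀ < B ∧ B < x₀ + μ / ν ∧ f A * f B < 0 ∧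
        |f A| = μ ∧ |f B| = μ ∧ (∀ t ∈ Ioo A B, |f t| < μ) ∧ InjOn f (Icc A B) := by
    intro x₀ _ h0 ha hb
    have hsub : Icc (x₀ - μ / ν) (x₀ + μ / ν) ⊆ Ioo a b :=
      fun x hx => ⟨by linarith [hx.1], by linarith [hx.2]⟩
    exact exists_separating_interval hμ hν (fun x hx => hderiv x (hsub hx))
      (fun x hx => hrep x (hsub hx)) h0
  choose! A B hεA hA hB hBε hsign hfA hfB hsmall hinj using key
  refine ⟨A, B, fun x₀ hx h0 ha hb => ⟨hεA x₀ hx h0 ha hb, hA x₀ hx h0 ha hb,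
    hB x₀ hx h0 ha hb, hBε x₀ hx h0 ha hb, hsign x₀ hx h0 ha hb, hfA x₀ hx h0 ha hb,
    hfB x₀ hx h0 ha hb⟩, fun x₀ y₀ hx hx0 hxa hxb hy hy0 hya hyb hne => ?_⟩
  by_contra hmeet
  obtain ⟨hAeq, hBeq⟩ := endpoints_eq_of_not_disjoint_Ioo (U := {t | |f t| < μ})
    (hsmall x₀ hx hx0 hxa hxb) (hsmall y₀ hy hy0 hya hyb) (hfA x₀ hx hx0 hxa hxb).ge.not_gt
    (hfB x₀ hx hx0 hxa hxb).ge.not_gt (hfA y₀ hy hy0 hya hyb).ge.not_gt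
    (hfB y₀ hy hy0 hya hyb).ge.not_gt hmeet
  have hyI : y₀ ∈ Icc (A x₀) (B x₀) := by
    rw [hAeq, hBeq]
    exact ⟨(hA y₀ hy hy0 hya hyb).le, (hB y₀ hy hy0 hya hyb).le⟩
  exact hne (hinj x₀ hx hx0 hxa hxb ⟨(hA x₀ hx hx0 hxa hxb).le, (hB x₀ hx hx0 hxa hxb).le⟩ hyI
    (hx0.trans hy0.symm))

theorem stmt18 (μ ν a b : ℝ) (hμ : 0 < μ) (hν : 0 < ν)
    (hab : 2 * μ / ν < b - a)
    (f f' : ℝ → ℝ)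
    (hderiv : ∀ x ∈ Set.Ioo a b, HasDerivAt f (f' x) x)
    (hcont : ContinuousOn f' (Set.Ioo a b))
    (hrep : ∀ x ∈ Set.Ioo a b, μ < |f x| ∨ ν < |f' x|) :
    ∃ A B : ℝ → ℝ,
      (∀ x₀, x₀ ∈ Set.Ioo a b → f x₀ = 0 → μ / ν < x₀ - a → μ / ν < b - x₀ →
        x₀ - μ / ν < A x₀ ∧ A x₀ < x₀ ∧ x₀ < B x₀ ∧ B x₀ < x₀ + μ / ν ∧
        f (A x₀) * f (B x₀) < 0 ∧ |f (A x₀)| = μ ∧ |f (B x₀)| = μ) ∧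
      (∀ x₀ y₀, x₀ ∈ Set.Ioo a b → f x₀ = 0 → μ / ν < x₀ - a → μ / ν < b - x₀ →
        y₀ ∈ Set.Ioo a b → f y₀ = 0 → μ / ν < y₀ - a → μ / ν < b - y₀ →
        x₀ ≠ y₀ →
        Disjoint (Set.Ioo (A x₀) (B x₀)) (Set.Ioo (A y₀) (B y₀))) :=
  stmt18_general μ ν a b hμ hν f f' hderiv hrep
end

section
/- Let μ, ν > 0, let I = (a,b) be an open interval with b − a > 2μ/ν, and let f be a C¹ function on I such that at each point x ∈ I either |f(x)| > μ or |f'(x)| > ν. Let g be a continuous function on I with |g(x)| < μ for all x ∈ I. Let Z = { x ∈ I : f(x) = 0, x − a > μ/ν, b − x > μ/ν }. Then there exists an injective map φ : Z → I such that for every x₀ ∈ Z one has (f + g)(φ(x₀)) = 0 and |φ(x₀) − x₀| < μ/ν. -/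
/-!
Around a zero `x₀` of `f`, as long as `|f| ≤ μ` the derivative satisfies `|f'| > ν`, so by continuity
`f'` keeps the sign of `f' x₀`. Hence, within distance `μ/ν` on either side, `f` leaves the strip
`|f| < μ`, on opposite sides of it; since `|g| < μ`, `f + g` changes sign there too and has a zero `φ x₀`
with `|f| ≤ μ` between `x₀` and `φ x₀`. Two zeros of `f` sharing the same `φ`-value would enclose, by
Rolle, a critical point of `f`, where `|f| > μ`: so `φ` is injective.
-/

open Set

section

variable {f f' g : ℝ → ℝ} {μ ν x₀ : ℝ}

theorem IsPreconnected.forall_lt_of_forall_lt_abs {s : Set ℝ} (hs : IsPreconnected s)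
    (hcont : ContinuousOn f' s) (hν : 0 ≤ ν) (hx₀ : x₀ ∈ s) (hpos : 0 < f' x₀)
    (hlt : ∀ x ∈ s, ν < |f' x|) : ∀ x ∈ s, ν < f' x := by
  intro x hx
  by_contra! hle
  have hneg : f' x < 0 := by
    cases abs_cases (f' x) <;> linarith [hlt x hx]
  obtain ⟨z, hz, hz0⟩ := hs.intermediate_value hx hx₀ hcont ⟨hneg.le, hpos.le⟩
  have := hlt z hz
  rw [hz0, abs_zero] at this
  linarith

theorem mul_sub_lt_sub_of_forall_lt_deriv {p q C : ℝ} (hpq : p < q)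
    (hderiv : ∀ x ∈ Icc p q, HasDerivAt f (f' x) x) (hlt : ∀ x ∈ Icc p q, C < f' x) :
    C * (q - p) < f q - f p := by
  obtain ⟨ξ, hξ, hslope⟩ := exists_hasDerivAt_eq_slope f f' hpq (HasDerivAt.continuousOn hderiv)
    fun x hx => hderiv x (Ioo_subset_Icc_self hx)
  rw [eq_div_iff (sub_pos.2 hpq).ne'] at hslope
  rw [← hslope]
  exact mul_lt_mul_of_pos_right (hlt ξ (Ioo_subset_Icc_self hξ)) (sub_pos.2 hpq)

theorem ContinuousOn.exists_first_eq_of_lt_of_le {u : ℝ → ℝ} {p q c : ℝ} (hpq : p ≤ q)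
    (hu : ContinuousOn u (Icc p q)) (hp : u p < c) (hq : c ≤ u q) :
    ∃ d ∈ Ioc p q, u d = c ∧ ∀ t ∈ Ico p d, u t < c := by
  set T := Icc p q ∩ u ⁻¹' {c}
  have hTne : T.Nonempty := by
    obtain ⟨z, hz, hzc⟩ := intermediate_value_Icc hpq hu ⟨hp.le, hq⟩
    exact ⟨z, hz, hzc⟩
  have hTbdd : BddBelow T := ⟨p, fun t ht => ht.1.1⟩
  obtain ⟨⟨hpd, hdq⟩, hdc⟩ : sInf T ∈ T :=
    (hu.preimage_isClosed_of_isClosed isClosed_Icc isClosed_singleton).csInf_mem hTne hTbdd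
  refine ⟨sInf T, ⟨lt_of_le_of_ne hpd fun hp_eq => hp.ne (hp_eq ▸ hdc), hdq⟩, hdc, fun t ht => ?_⟩
  by_contra! hct
  obtain ⟨z, hz, hzc⟩ := intermediate_value_Icc ht.1 (hu.mono (Icc_subset_Icc_right
    (ht.2.le.trans hdq))) ⟨hp.le, hct⟩
  have : sInf T ≤ z := csInf_le hTbdd ⟨⟨hz.1, hz.2.trans (ht.2.le.trans hdq)⟩, hzc⟩
  linarith [hz.2, ht.2]

theorem exists_right_eq_of_deriv_pos (hμ : 0 < μ) (hν : 0 < ν)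
    (hderiv : ∀ x ∈ Icc x₀ (x₀ + μ / ν), HasDerivAt f (f' x) x)
    (hcont : ContinuousOn f' (Icc x₀ (x₀ + μ / ν)))
    (hrep : ∀ x ∈ Icc x₀ (x₀ + μ / ν), μ < |f x| ∨ ν < |f' x|)
    (hf : f x₀ = 0) (hf' : 0 < f' x₀) :
    ∃ d ∈ Ioc x₀ (x₀ + μ / ν), f d = μ ∧ ∀ t ∈ Ico x₀ d, |f t| < μ := by
  set r := μ / ν
  have hr : 0 < r := div_pos hμ hν
  have hνr : ν * r = μ := mul_div_cancel₀ μ hν.ne'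
  have hsteep : ∀ q ∈ Icc x₀ (x₀ + r), (∀ t ∈ Icc x₀ q, |f t| ≤ μ) →
      ∀ t ∈ Icc x₀ q, ν < f' t := by
    intro q hq hsmall
    have hsub : Icc x₀ q ⊆ Icc x₀ (x₀ + r) := Icc_subset_Icc_right hq.2
    exact isPreconnected_Icc.forall_lt_of_forall_lt_abs (hcont.mono hsub) hν.le
      ⟨le_rfl, hq.1⟩ hf' fun t ht => (hrep t (hsub ht)).resolve_left (hsmall t ht).not_gt
  obtain ⟨q, hq, hμq⟩ : ∃ q ∈ Icc x₀ (x₀ + r), μ ≤ |f q| := by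
    by_contra! hsmall
    have := mul_sub_lt_sub_of_forall_lt_deriv (by linarith) hderiv
      (hsteep _ ⟨by linarith, le_rfl⟩ fun t ht => (hsmall t ht).le)
    have := le_abs_self (f (x₀ + r))
    linarith [hsmall (x₀ + r) ⟨by linarith, le_rfl⟩]
  have habs : ContinuousOn (fun t => |f t|) (Icc x₀ q) :=
    (HasDerivAt.continuousOn hderiv).abs.mono (Icc_subset_Icc_right hq.2)
  obtain ⟨d, ⟨hx₀d, hdq⟩, hfd, hbefore⟩ :=
    habs.exists_first_eq_of_lt_of_le hq.1 (by simpa [hf] using hμ) hμq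
  have hd : d ∈ Icc x₀ (x₀ + r) := ⟨hx₀d.le, hdq.trans hq.2⟩
  have hgrow := mul_sub_lt_sub_of_forall_lt_deriv hx₀d
    (fun t ht => hderiv t ⟨ht.1, ht.2.trans hd.2⟩)
    (hsteep d hd fun t ht => (eq_or_lt_of_le ht.2).elim (fun h => (h ▸ hfd).le)
      fun h => (hbefore t ⟨ht.1, h⟩).le)
  have hfd_pos : 0 < f d := by nlinarith
  exact ⟨d, ⟨hx₀d, hd.2⟩, by rwa [abs_of_pos hfd_pos] at hfd, hbefore⟩

theorem exists_left_eq_of_deriv_pos (hμ : 0 < μ) (hν : 0 < ν)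
    (hderiv : ∀ x ∈ Icc (x₀ - μ / ν) x₀, HasDerivAt f (f' x) x)
    (hcont : ContinuousOn f' (Icc (x₀ - μ / ν) x₀))
    (hrep : ∀ x ∈ Icc (x₀ - μ / ν) x₀, μ < |f x| ∨ ν < |f' x|)
    (hf : f x₀ = 0) (hf' : 0 < f' x₀) :
    ∃ c ∈ Ico (x₀ - μ / ν) x₀, f c = -μ ∧ ∀ t ∈ Ioc c x₀, |f t| < μ := by
  have hmem : ∀ x ∈ Icc (-x₀) (-x₀ + μ / ν), -x ∈ Icc (x₀ - μ / ν) x₀ :=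
    fun x hx => ⟨by linarith [hx.2], by linarith [hx.1]⟩
  obtain ⟨d, hd, hfd, hbefore⟩ := exists_right_eq_of_deriv_pos (f := fun t => -f (-t))
    (f' := fun t => f' (-t)) (x₀ := -x₀) hμ hν
    (fun x hx => by
      have := ((hderiv (-x) (hmem x hx)).comp x (hasDerivAt_neg x)).neg
      rwa [mul_neg_one, neg_neg] at this)
    (hcont.comp continuous_neg.continuousOn hmem)
    (fun x hx => by simpa only [abs_neg] using hrep (-x) (hmem x hx))
    (by simp [hf]) (by simpa using hf')
  refine ⟨-d, ⟨by linarith [hd.2], by linarith [hd.1]⟩, by linarith, fun t ht => ?_⟩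
  simpa using hbefore (-t) ⟨by linarith [ht.2], by linarith [ht.1]⟩

theorem exists_add_eq_zero_near_of_deriv_pos (hμ : 0 < μ) (hν : 0 < ν)
    (hderiv : ∀ x ∈ Icc (x₀ - μ / ν) (x₀ + μ / ν), HasDerivAt f (f' x) x)
    (hcont : ContinuousOn f' (Icc (x₀ - μ / ν) (x₀ + μ / ν)))
    (hrep : ∀ x ∈ Icc (x₀ - μ / ν) (x₀ + μ / ν), μ < |f x| ∨ ν < |f' x|)
    (hgcont : ContinuousOn g (Icc (x₀ - μ / ν) (x₀ + μ / ν)))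
    (hg : ∀ x ∈ Icc (x₀ - μ / ν) (x₀ + μ / ν), |g x| < μ)
    (hf : f x₀ = 0) (hf' : 0 < f' x₀) :
    ∃ y ∈ Ioo (x₀ - μ / ν) (x₀ + μ / ν), f y + g y = 0 ∧ ∀ t ∈ uIcc x₀ y, |f t| ≤ μ := by
  have hleft : Icc (x₀ - μ / ν) x₀ ⊆ Icc (x₀ - μ / ν) (x₀ + μ / ν) :=
    Icc_subset_Icc_right (by linarith [div_pos hμ hν])
  have hright : Icc x₀ (x₀ + μ / ν) ⊆ Icc (x₀ - μ / ν) (x₀ + μ / ν) :=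
    Icc_subset_Icc_left (by linarith [div_pos hμ hν])
  obtain ⟨c, hc, hfc, hsmall_c⟩ := exists_left_eq_of_deriv_pos hμ hν
    (fun x hx => hderiv x (hleft hx)) (hcont.mono hleft) (fun x hx => hrep x (hleft hx)) hf hf'
  obtain ⟨d, hd, hfd, hsmall_d⟩ := exists_right_eq_of_deriv_pos hμ hν
    (fun x hx => hderiv x (hright hx)) (hcont.mono hright) (fun x hx => hrep x (hright hx)) hf hf'
  have hcd : Icc c d ⊆ Icc (x₀ - μ / ν) (x₀ + μ / ν) := Icc_subset_Icc hc.1 hd.2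
  have hsmall : ∀ t ∈ Ioo c d, |f t| < μ := fun t ht =>
    (le_or_gt t x₀).elim (fun h => hsmall_c t ⟨ht.1, h⟩) fun h => hsmall_d t ⟨h.le, ht.2⟩
  have hneg : f c + g c < 0 := by
    linarith [(abs_lt.1 (hg c (hcd ⟨le_rfl, by linarith [hc.2, hd.1]⟩))).2]
  have hpos : 0 < f d + g d := by
    linarith [(abs_lt.1 (hg d (hcd ⟨by linarith [hc.2, hd.1], le_rfl⟩))).1]
  obtain ⟨y, hy, hy0⟩ := intermediate_value_Ioo (by linarith [hc.2, hd.1])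
    (((HasDerivAt.continuousOn hderiv).add hgcont).mono hcd) ⟨hneg, hpos⟩
  refine ⟨y, ⟨by linarith [hc.1, hy.1], by linarith [hd.2, hy.2]⟩, hy0, fun t ht => ?_⟩
  exact (hsmall t (ordConnected_Ioo.uIcc_subset ⟨hc.2, hd.1⟩ hy ht)).le

theorem exists_add_eq_zero_near (hμ : 0 < μ) (hν : 0 < ν)
    (hderiv : ∀ x ∈ Icc (x₀ - μ / ν) (x₀ + μ / ν), HasDerivAt f (f' x) x)
    (hcont : ContinuousOn f' (Icc (x₀ - μ / ν) (x₀ + μ / ν)))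
    (hrep : ∀ x ∈ Icc (x₀ - μ / ν) (x₀ + μ / ν), μ < |f x| ∨ ν < |f' x|)
    (hgcont : ContinuousOn g (Icc (x₀ - μ / ν) (x₀ + μ / ν)))
    (hg : ∀ x ∈ Icc (x₀ - μ / ν) (x₀ + μ / ν), |g x| < μ) (hf : f x₀ = 0) :
    ∃ y ∈ Ioo (x₀ - μ / ν) (x₀ + μ / ν), f y + g y = 0 ∧ ∀ t ∈ uIcc x₀ y, |f t| ≤ μ := by
  have hx₀ : x₀ ∈ Icc (x₀ - μ / ν) (x₀ + μ / ν) := by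
    constructor <;> linarith [div_pos hμ hν]
  have hf' : ν < |f' x₀| := (hrep x₀ hx₀).resolve_left (by simp [hf, hμ.le])
  rcases lt_abs.1 hf' with hpos | hneg
  · exact exists_add_eq_zero_near_of_deriv_pos hμ hν hderiv hcont hrep hgcont hg hf
      (hν.trans hpos)
  · obtain ⟨y, hy, hy0, hsmall⟩ := exists_add_eq_zero_near_of_deriv_pos (f := -f) (f' := -f')
      (g := -g) hμ hν (fun x hx => (hderiv x hx).neg) hcont.neg
      (fun x hx => by simpa only [Pi.neg_apply, abs_neg] using hrep x hx) hgcont.neg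
      (fun x hx => by simpa only [Pi.neg_apply, abs_neg] using hg x hx) (by simp [hf])
      (by simp only [Pi.neg_apply]; linarith)
    refine ⟨y, hy, by simp only [Pi.neg_apply] at hy0; linarith, fun t ht => ?_⟩
    simpa only [Pi.neg_apply, abs_neg] using hsmall t ht

theorem eq_of_forall_abs_le_of_critical (hderiv : ∀ x ∈ uIcc x₀ x₁, HasDerivAt f (f' x) x)
    (hcrit : ∀ x ∈ uIcc x₀ x₁, f' x = 0 → μ < |f x|)
    (hsmall : ∀ x ∈ uIcc x₀ x₁, |f x| ≤ μ) (hf : f x₀ = f x₁) : x₀ = x₁ := by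
  wlog h : x₀ ≤ x₁ generalizing x₀ x₁
  · exact (this (uIcc_comm x₀ x₁ ▸ hderiv) (uIcc_comm x₀ x₁ ▸ hcrit)
      (uIcc_comm x₀ x₁ ▸ hsmall) hf.symm (le_of_not_ge h)).symm
  rw [uIcc_of_le h] at hderiv hcrit hsmall
  by_contra hne
  obtain ⟨ξ, hξ, hξ0⟩ := exists_hasDerivAt_eq_zero (lt_of_le_of_ne h hne)
    (HasDerivAt.continuousOn hderiv) hf fun x hx => hderiv x (Ioo_subset_Icc_self hx)
  exact (hsmall ξ (Ioo_subset_Icc_self hξ)).not_gt (hcrit ξ (Ioo_subset_Icc_self hξ) hξ0)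

end

theorem stmt19_general (μ ν a b : ℝ) (hμ : 0 < μ) (hν : 0 < ν)
    (f f' g : ℝ → ℝ)
    (hderiv : ∀ x ∈ Set.Ioo a b, HasDerivAt f (f' x) x)
    (hcont : ContinuousOn f' (Set.Ioo a b))
    (hrep : ∀ x ∈ Set.Ioo a b, μ < |f x| ∨ ν < |f' x|)
    (hgcont : ContinuousOn g (Set.Ioo a b))
    (hg : ∀ x ∈ Set.Ioo a b, |g x| < μ) :
    ∃ φ : ℝ → ℝ,
      Set.InjOn φ {x | x ∈ Set.Ioo a b ∧ f x = 0 ∧ μ / ν < x - a ∧ μ / ν < b - x} ∧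
      ∀ x₀, x₀ ∈ Set.Ioo a b → f x₀ = 0 → μ / ν < x₀ - a → μ / ν < b - x₀ →
        φ x₀ ∈ Set.Ioo a b ∧ f (φ x₀) + g (φ x₀) = 0 ∧ |φ x₀ - x₀| < μ / ν := by
  have hnear : ∀ x₀ ∈ {x | x ∈ Ioo a b ∧ f x = 0 ∧ μ / ν < x - a ∧ μ / ν < b - x},
      ∃ y ∈ Ioo (x₀ - μ / ν) (x₀ + μ / ν), f y + g y = 0 ∧ ∀ t ∈ uIcc x₀ y, |f t| ≤ μ := by
    rintro x₀ ⟨-, hf, ha, hb⟩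
    have hI : Icc (x₀ - μ / ν) (x₀ + μ / ν) ⊆ Ioo a b :=
      Icc_subset_Ioo (by linarith) (by linarith)
    exact exists_add_eq_zero_near hμ hν (fun x hx => hderiv x (hI hx)) (hcont.mono hI)
      (fun x hx => hrep x (hI hx)) (hgcont.mono hI) (fun x hx => hg x (hI hx)) hf
  choose! φ hφI hφ0 hφsmall using hnear
  refine ⟨φ, fun x₀ hx₀ x₁ hx₁ hφeq => ?_, fun x₀ hx₀ hf ha hb => ?_⟩
  · have hI : uIcc x₀ x₁ ⊆ Ioo a b := ordConnected_Ioo.uIcc_subset hx₀.1 hx₁.1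
    refine eq_of_forall_abs_le_of_critical (fun x hx => hderiv x (hI hx))
      (fun x hx hx0 => (hrep x (hI hx)).resolve_right (by simp [hx0, hν.le]))
      (fun x hx => ?_) (hx₀.2.1.trans hx₁.2.1.symm)
    rcases uIcc_subset_uIcc_union_uIcc (b := φ x₀) hx with h | h
    · exact hφsmall x₀ hx₀ x h
    · exact hφsmall x₁ hx₁ x (by rwa [← hφeq, uIcc_comm])
  · have hy := hφI x₀ ⟨hx₀, hf, ha, hb⟩
    refine ⟨⟨by linarith [hy.1], by linarith [hy.2]⟩, hφ0 x₀ ⟨hx₀, hf, ha, hb⟩, ?_⟩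
    exact abs_sub_lt_iff.2 ⟨by linarith [hy.2], by linarith [hy.1]⟩

theorem stmt19 (μ ν a b : ℝ) (hμ : 0 < μ) (hν : 0 < ν)
    (hab : 2 * μ / ν < b - a)
    (f f' g : ℝ → ℝ)
    (hderiv : ∀ x ∈ Set.Ioo a b, HasDerivAt f (f' x) x)
    (hcont : ContinuousOn f' (Set.Ioo a b))
    (hrep : ∀ x ∈ Set.Ioo a b, μ < |f x| ∨ ν < |f' x|)
    (hgcont : ContinuousOn g (Set.Ioo a b))
    (hg : ∀ x ∈ Set.Ioo a b, |g x| < μ) :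
    ∃ φ : ℝ → ℝ,
      Set.InjOn φ {x | x ∈ Set.Ioo a b ∧ f x = 0 ∧ μ / ν < x - a ∧ μ / ν < b - x} ∧
      ∀ x₀, x₀ ∈ Set.Ioo a b → f x₀ = 0 → μ / ν < x₀ - a → μ / ν < b - x₀ →
        φ x₀ ∈ Set.Ioo a b ∧ f (φ x₀) + g (φ x₀) = 0 ∧ |φ x₀ - x₀| < μ / ν :=
  stmt19_general μ ν a b hμ hν f f' g hderiv hcont hrep hgcont hg
end
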